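/- arXiv:2209.04046 — 8 statements merged into one kernel-verified Lean document; each statement's English description precedes it below -/
import Mathlib

section
/- Let (R, m) be a Noetherian local ring and M a flat R-module. Then the set N = {x ∈ M : the R-module map R → M sending 1 to x is not pure} equals m·M. -/
universe u v

/-- A map of `R`-modules `N → M` is *pure* if after tensoring with any `R`-module `K`,
the induced map `N ⊗ K → M ⊗ K` is injective. -/
def IsPureMap {R : Type u} [CommRing R] {N M : Type v} [AddCommGroup N] [Module R N]
    [AddCommGroup M] [Module R M] (f : N →ₗ[R] M) : Prop :=
  ∀ (K : Type v) [AddCommGroup K] [Module R K], Function.Injective (LinearMap.rTensor K f)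

/-- Let `(R, m)` be a Noetherian local ring and `M` a flat `R`-module.  Then the set
`N = {x ∈ M : R → M, 1 ↦ x, is not pure}` equals `m·M`. -/
theorem nonpure_locus_eq_maximalIdeal_smul_of_flat {R : Type u} [CommRing R]
    [IsNoetherianRing R] [IsLocalRing R] (M : Type u) [AddCommGroup M] [Module R M]
    [Module.Flat R M] :
    {x : M | ¬ IsPureMap (LinearMap.toSpanSingleton R M x)} =
      ↑(IsLocalRing.maximalIdeal R • (⊤ : Submodule R M)) := by
  ext x
  simp only [Set.mem_setOf_eq, SetLike.mem_coe]
  constructor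
  · -- not pure → x ∈ m•M, by contrapositive: x ∉ m•M → pure
    intro h
    by_contra hx
    apply h
    intro K _ _
    rw [injective_iff_map_eq_zero]
    intro z hz
    -- write z = 1 ⊗ k
    set k : K := TensorProduct.lid R K z with hk
    have hzk : z = (1 : R) ⊗ₜ[R] k := by
      conv_lhs => rw [← (TensorProduct.lid R K).symm_apply_apply z]
      rw [← hk, TensorProduct.lid_symm_apply]
    have hxk : x ⊗ₜ[R] k = 0 := by
      have : LinearMap.rTensor K (LinearMap.toSpanSingleton R M x) ((1 : R) ⊗ₜ[R] k)
          = x ⊗ₜ[R] k := by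
        simp [LinearMap.rTensor_tmul]
      rw [← this, ← hzk, hz]
    -- consider the annihilator ideal of k
    set q : R →ₗ[R] K := LinearMap.toSpanSingleton R K k with hq
    set I : Ideal R := LinearMap.ker q with hI
    by_cases hItop : I = ⊤
    · -- then k = 0 hence z = 0
      have h1 : (1 : R) ∈ I := hItop ▸ Submodule.mem_top
      have hk0 : k = 0 := by
        have := h1
        rw [hI, LinearMap.mem_ker, hq] at this
        simpa using this
      rw [hzk, hk0, TensorProduct.tmul_zero]
    · -- I proper: derive x ∈ I•M ≤ m•M, contradiction
      exfalso
      -- injective map R⧸I → K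
      set ι : (R ⧸ I) →ₗ[R] K := I.liftQ q le_rfl with hι
      have hιinj : Function.Injective ι := by
        rw [← LinearMap.ker_eq_bot, hι, Submodule.ker_liftQ_eq_bot]
        exact le_rfl
      have hMι : Function.Injective (LinearMap.lTensor M ι) :=
        Module.Flat.lTensor_preserves_injective_linearMap ι hιinj
      have h1k : ι (Ideal.Quotient.mk I 1) = k := by
        rw [hι]
        exact (Submodule.liftQ_apply _ _ _).trans (by simp [hq])
      have hten : LinearMap.lTensor M ι (x ⊗ₜ[R] Ideal.Quotient.mk I 1) = 0 := by
        rw [LinearMap.lTensor_tmul, h1k, hxk]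
      have h0 : x ⊗ₜ[R] Ideal.Quotient.mk I 1 = 0 := by
        apply hMι
        rw [hten, map_zero]
      have hxI : x ∈ (I • ⊤ : Submodule R M) := by
        have := congrArg (TensorProduct.tensorQuotEquivQuotSMul M I) h0
        rw [TensorProduct.tensorQuotEquivQuotSMul_tmul_mk, map_zero, one_smul] at this
        exact (Submodule.Quotient.mk_eq_zero _).mp this
      exact hx (Submodule.smul_mono_left (IsLocalRing.le_maximalIdeal hItop) hxI)
  · -- x ∈ m•M → not pure: test against K = R ⧸ m
    intro hx h
    set m := IsLocalRing.maximalIdeal R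
    have hinj := h (R ⧸ m)
    have h0 : x ⊗ₜ[R] (1 : R ⧸ m) = 0 := by
      have : x ⊗ₜ[R] (1 : R ⧸ m) =
          (TensorProduct.tensorQuotEquivQuotSMul M m).symm (Submodule.Quotient.mk x) :=
        (TensorProduct.tensorQuotEquivQuotSMul_symm_mk m x).symm
      rw [this, (Submodule.Quotient.mk_eq_zero _).mpr hx, map_zero]
    have hz : LinearMap.rTensor (R ⧸ m) (LinearMap.toSpanSingleton R M x)
        ((1 : R) ⊗ₜ[R] (1 : R ⧸ m)) = 0 := by
      rw [LinearMap.rTensor_tmul]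
      simpa using h0
    have : (1 : R) ⊗ₜ[R] (1 : R ⧸ m) = 0 := by
      apply hinj
      rw [hz, map_zero]
    have h1 : (1 : R ⧸ m) = 0 := by
      have := congrArg (TensorProduct.lid R (R ⧸ m)) this
      simp at this
    exact (IsLocalRing.maximalIdeal.isMaximal R).ne_top
      ((Ideal.eq_top_iff_one m).mpr (Ideal.Quotient.eq_zero_iff_mem.mp (by rw [map_one]; exact h1)))
end

section
/- Let (R, m) be a Noetherian local ring with residue field k and injective hull E = E_R(k). A map of R-modules R → M is pure if and only if the induced map E → E ⊗_R M is injective. -/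
universe u v

/-- A submodule embedding `ι : N → E` is *essential* if every nonzero submodule of `E`
meets the image of `ι` nontrivially. -/
def IsEssentialEmbedding {R : Type u} [CommRing R] {N E : Type v} [AddCommGroup N] [Module R N]
    [AddCommGroup E] [Module R E] (ι : N →ₗ[R] E) : Prop :=
  Function.Injective ι ∧
    ∀ P : Submodule R E, P ≠ ⊥ → P ⊓ LinearMap.range ι ≠ ⊥

open TensorProduct in
/-- Let `(R, m)` be a Noetherian local ring with residue field `k` and injective hull
`E = E_R(k)`.  A map of `R`-modules `R → M` is pure if and only if the induced map
`E → E ⊗_R M` is injective. -/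
theorem isPureMap_iff_injective_tensor_injectiveHull {R : Type u} [CommRing R]
    [IsNoetherianRing R] [IsLocalRing R]
    (E : Type u) [AddCommGroup E] [Module R E] [Module.Injective R E]
    (ι : IsLocalRing.ResidueField R →ₗ[R] E) (hE : IsEssentialEmbedding ι)
    (M : Type u) [AddCommGroup M] [Module R M] (f : R →ₗ[R] M) :
    IsPureMap f ↔
      Function.Injective
        ((LinearMap.lTensor E f).comp (TensorProduct.rid R E).symm.toLinearMap) := by
  constructor
  · -- purity implies injectivity of `E → E ⊗ M`
    intro hPure
    rw [← LinearMap.ker_eq_bot, eq_bot_iff]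
    intro e he
    have he' : (LinearMap.lTensor E f) ((TensorProduct.rid R E).symm e) = 0 := he
    rw [TensorProduct.rid_symm_apply, LinearMap.lTensor_tmul] at he'
    -- so `e ⊗ f 1 = 0` in `E ⊗ M`; apply `comm` to get `f 1 ⊗ e = 0` in `M ⊗ E`
    have hc : (f 1 : M) ⊗ₜ[R] e = (0 : M ⊗[R] E) := by
      have := congrArg (TensorProduct.comm R E M) he'
      simpa using this
    have h1 : (LinearMap.rTensor E f) ((1 : R) ⊗ₜ[R] e) = 0 := by
      rw [LinearMap.rTensor_tmul, hc]
    have h0 : ((1 : R) ⊗ₜ[R] e : R ⊗[R] E) = 0 := by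
      have := hPure E (by rw [h1, map_zero] : (LinearMap.rTensor E f) ((1 : R) ⊗ₜ[R] e)
        = (LinearMap.rTensor E f) 0)
      exact this
    have : e = TensorProduct.lid R E ((1 : R) ⊗ₜ[R] e) := by simp
    rw [this, h0, map_zero]
    exact Submodule.zero_mem ⊥
  · -- injectivity of `E → E ⊗ M` implies purity
    intro hInj K _ _
    rw [← LinearMap.ker_eq_bot, eq_bot_iff]
    intro z hz
    have hz' : (LinearMap.rTensor K f) z = 0 := hz
    -- reduce to the element `x = lid z` of `K`
    set x : K := TensorProduct.lid R K z with hxdef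
    have hzx : ((TensorProduct.lid R K).symm x : R ⊗[R] K) = z := by
      rw [hxdef]; exact (TensorProduct.lid R K).symm_apply_apply z
    have hfx : (f 1 : M) ⊗ₜ[R] x = (0 : M ⊗[R] K) := by
      have : (LinearMap.rTensor K f) ((1 : R) ⊗ₜ[R] x) = f 1 ⊗ₜ[R] x :=
        LinearMap.rTensor_tmul _ _ _ _
      rw [← this, ← TensorProduct.lid_symm_apply, hzx, hz']
    -- show `x = 0`; then `z = 0`
    suffices hx0 : x = 0 by
      rw [← hzx, hx0, map_zero]
      exact Submodule.zero_mem ⊥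
    by_contra hx
    -- `I` is the annihilator of `x`
    set θ₀ : R →ₗ[R] K := LinearMap.toSpanSingleton R K x with hθ₀
    set I : Ideal R := LinearMap.ker θ₀ with hI
    have hI_ne : I ≠ ⊤ := by
      intro h
      have h1I : (1 : R) ∈ I := h ▸ Submodule.mem_top
      have : (1 : R) • x = 0 := h1I
      rw [one_smul] at this
      exact hx this
    have hIm : I ≤ IsLocalRing.maximalIdeal R := IsLocalRing.le_maximalIdeal hI_ne
    -- the induced injective map `R/I → K`
    set θ : (R ⧸ I) →ₗ[R] K := Submodule.liftQ I θ₀ le_rfl with hθ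
    have hθinj : Function.Injective θ := by
      rw [← LinearMap.ker_eq_bot, hθ]
      exact Submodule.ker_liftQ_eq_bot I θ₀ le_rfl le_rfl
    -- the map `R/I → R/m = k`
    set π : (R ⧸ I) →ₗ[R] (R ⧸ IsLocalRing.maximalIdeal R) :=
      Submodule.mapQ I (IsLocalRing.maximalIdeal R) LinearMap.id hIm with hπ
    -- extend `ι ∘ π : R/I → E` along `θ` using injectivity of `E`
    obtain ⟨φ, hφ⟩ := Module.Injective.out θ hθinj (ι.comp π)
    -- `φ x = ι 1 ≠ 0`
    have hφx : φ x = ι (1 : IsLocalRing.ResidueField R) := by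
      have h1 : θ (Submodule.Quotient.mk (1 : R)) = x := by
        show θ₀ 1 = x
        simp [hθ₀]
      have h2 : π (Submodule.Quotient.mk (1 : R))
          = Submodule.Quotient.mk ((LinearMap.id : R →ₗ[R] R) (1 : R)) :=
        Submodule.mapQ_apply _ _ _ _
      calc φ x = φ (θ (Submodule.Quotient.mk (1 : R))) := by rw [h1]
        _ = (ι.comp π) (Submodule.Quotient.mk (1 : R)) := hφ _
        _ = ι (Submodule.Quotient.mk (1 : R)) := congrArg ι h2
        _ = ι 1 := rfl
    have hφx_ne : φ x ≠ 0 := by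
      rw [hφx]
      intro h
      have := hE.1 (by simpa using h : ι (1 : IsLocalRing.ResidueField R) = ι 0)
      exact one_ne_zero this
    -- push the relation `f 1 ⊗ x = 0` into `M ⊗ E`
    have hME : (f 1 : M) ⊗ₜ[R] (φ x) = (0 : M ⊗[R] E) := by
      have := congrArg (LinearMap.lTensor M φ) hfx
      simpa using this
    -- transport to `E ⊗ M` and use the hypothesis
    have hEM : (φ x) ⊗ₜ[R] (f 1 : M) = (0 : E ⊗[R] M) := by
      have := congrArg (TensorProduct.comm R M E) hME
      simpa using this
    have happ : ((LinearMap.lTensor E f).comp (TensorProduct.rid R E).symm.toLinearMap) (φ x)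
        = 0 := by
      simp only [LinearMap.comp_apply, LinearEquiv.coe_toLinearMap, TensorProduct.rid_symm_apply,
        LinearMap.lTensor_tmul]
      exact hEM
    have : φ x = 0 := hInj (by rw [happ, map_zero])
    exact hφx_ne this
end

section
/- Let (R, m) be a Noetherian local ring, M an R-module, and suppose (I_t) is a descending chain of m-primary ideals such that each R/I_t is Gorenstein Artinian with socle generated by the image of u_t ∈ R, such that E_R(k) = colim_t R/I_t. Then the set N = {x ∈ M : the map R → M, 1 ↦ x, is not pure} equals the union over t of the submodules (I_t M :_M u_t). -/
/-! If `u_t • x ∈ I_t M`, then `x ⊗ ū_t = 0` in `M ⊗ R/I_t` although `ū_t ≠ 0`, so `R → M`,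
`1 ↦ x`, is not pure. Conversely, a witness `x ⊗ k = 0` with `k ≠ 0` is pushed into `E` along a
map `K → E` not killing `k` (it exists because `E` is injective and contains the residue field).
A relation `x ⊗ e = 0` in `M ⊗ E` already holds over a finitely generated submodule of `E`, hence
over some `R/I_t`: this gives `r ∉ I_t` with `r • x ∈ I_t M`. Since `R/I_t` is Artinian with
socle spanned by `ū_t`, the nonzero ideal `(I_t + (r))/I_t` contains `ū_t`, so
`u_t ∈ I_t + (r)` and `u_t • x ∈ I_t M`. -/

universe u v

open TensorProduct IsLocalRing

section QuotientTensor

variable {R M : Type*} [CommRing R] [AddCommGroup M] [Module R M]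

lemma tmul_mk_eq_zero_iff_smul_mem (I : Ideal R) (x : M) (r : R) :
    x ⊗ₜ[R] Ideal.Quotient.mk I r = 0 ↔ r • x ∈ I • (⊤ : Submodule R M) := by
  rw [← (tensorQuotEquivQuotSMul M I).map_eq_zero_iff, tensorQuotEquivQuotSMul_tmul_mk,
    Submodule.Quotient.mk_eq_zero]

lemma smul_mem_smul_top_of_mem_sup_span_singleton {I : Ideal R} {r a : R} {x : M}
    (ha : a ∈ I ⊔ Ideal.span {r}) (hrx : r • x ∈ I • (⊤ : Submodule R M)) :
    a • x ∈ I • (⊤ : Submodule R M) := by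
  have hle : I ⊔ Ideal.span {r} ≤ (I • (⊤ : Submodule R M)).colon {x} :=
    sup_le (fun b hb => Submodule.mem_colon_singleton.mpr (Submodule.smul_mem_smul hb trivial))
      (Ideal.span_singleton_le_iff_mem _ |>.mpr (Submodule.mem_colon_singleton.mpr hrx))
  exact Submodule.mem_colon_singleton.mp (hle ha)

end QuotientTensor

section Purity

variable {R : Type u} [CommRing R] {M : Type u} [AddCommGroup M] [Module R M]

lemma isPureMap_toSpanSingleton_iff (x : M) :
    IsPureMap (LinearMap.toSpanSingleton R M x) ↔
      ∀ (K : Type u) [AddCommGroup K] [Module R K] (k : K), x ⊗ₜ[R] k = 0 → k = 0 := by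
  refine forall_congr' fun K => forall_congr' fun _ => forall_congr' fun _ => ?_
  have hfactor : LinearMap.rTensor K (LinearMap.toSpanSingleton R M x) =
      TensorProduct.mk R M K x ∘ₗ (TensorProduct.lid R K).toLinearMap := by
    ext k
    simp
  rw [hfactor, LinearMap.coe_comp, LinearEquiv.coe_coe, EquivLike.injective_comp,
    injective_iff_map_eq_zero]
  rfl

lemma not_isPureMap_toSpanSingleton_of_smul_mem {I : Ideal R} {r : R} {x : M} (hr : r ∉ I)
    (hrx : r • x ∈ I • (⊤ : Submodule R M)) : ¬ IsPureMap (LinearMap.toSpanSingleton R M x) :=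
  fun hpure => hr <| Ideal.Quotient.eq_zero_iff_mem.mp <|
    (isPureMap_toSpanSingleton_iff x).mp hpure (R ⧸ I) _
      ((tmul_mk_eq_zero_iff_smul_mem I x r).mpr hrx)

end Purity

section Socle

variable {R : Type*} [CommRing R]

lemma Ideal.exists_notMem_mem_colon_of_mul_pow_le {I J m : Ideal R} (k : ℕ)
    (hk : J * m ^ k ≤ I) (hJ : ¬ J ≤ I) : ∃ y ∈ J, y ∉ I ∧ y ∈ I.colon m := by
  induction k generalizing J with
  | zero =>
    rw [pow_zero, mul_one] at hk
    exact absurd hk hJ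
  | succ k ih =>
    by_cases hJm : J * m ≤ I
    · obtain ⟨y, hyJ, hyI⟩ := SetLike.not_le_iff_exists.mp hJ
      refine ⟨y, hyJ, hyI, Submodule.mem_colon.mpr fun a ha => ?_⟩
      exact hJm (Ideal.mul_mem_mul hyJ ha)
    · obtain ⟨y, hy, hyI, hyc⟩ := ih (by rwa [mul_assoc, ← pow_succ']) hJm
      exact ⟨y, Ideal.mul_le_left hy, hyI, hyc⟩

variable [IsLocalRing R] {I : Ideal R} {u : R}

lemma mem_sup_span_singleton_of_colon_maximalIdeal_eq
    (hcolon : I.colon (maximalIdeal R) = I ⊔ Ideal.span {u}) {y : R}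
    (hy : y ∈ I.colon (maximalIdeal R)) (hyI : y ∉ I) : u ∈ I ⊔ Ideal.span {y} := by
  have hu : u ∈ I.colon (maximalIdeal R) :=
    hcolon ▸ Ideal.mem_sup_right (Ideal.mem_span_singleton_self u)
  rw [hcolon] at hy
  obtain ⟨i, hi, _, hsu, hy⟩ := Submodule.mem_sup.mp hy
  obtain ⟨s, rfl⟩ := Ideal.mem_span_singleton'.mp hsu
  have hs : IsUnit s := by
    refine IsLocalRing.notMem_maximalIdeal.mp fun hs => hyI ?_
    rw [← hy]
    exact I.add_mem hi (mul_comm u s ▸ Submodule.mem_colon.mp hu s hs)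
  obtain ⟨w, hw⟩ := hs.exists_left_inv
  have hu_eq : u = w * y - w * i := by
    rw [← hy, mul_add, ← mul_assoc, hw, one_mul, add_sub_cancel_left]
  rw [hu_eq]
  exact sub_mem (Ideal.mem_sup_right (Ideal.mul_mem_left _ w (Ideal.mem_span_singleton_self y)))
    (Ideal.mem_sup_left (I.mul_mem_left w hi))

lemma mem_sup_span_singleton_of_notMem (hprimary : ∃ k : ℕ, maximalIdeal R ^ k ≤ I)
    (hcolon : I.colon (maximalIdeal R) = I ⊔ Ideal.span {u}) {r : R} (hr : r ∉ I) :
    u ∈ I ⊔ Ideal.span {r} := by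
  obtain ⟨k, hk⟩ := hprimary
  obtain ⟨y, hyr, hyI, hyc⟩ := Ideal.exists_notMem_mem_colon_of_mul_pow_le (J := Ideal.span {r}) k
    (Ideal.mul_le_right.trans hk) (mt (Ideal.span_singleton_le_iff_mem _).mp hr)
  exact sup_le_sup_left ((Ideal.span_singleton_le_iff_mem _).mpr hyr) I
    (mem_sup_span_singleton_of_colon_maximalIdeal_eq hcolon hyc hyI)

end Socle

section InjectiveHull

variable {R : Type u} [CommRing R] {E : Type u} [AddCommGroup E] [Module R E]

lemma exists_linearMap_apply_ne_zero [IsLocalRing R] [Module.Injective R E]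
    (κ : ResidueField R →ₗ[R] E) (hκ : Function.Injective κ)
    {K : Type*} [AddCommGroup K] [Module R K] {k : K} (hk : k ≠ 0) :
    ∃ ψ : K →ₗ[R] E, ψ k ≠ 0 := by
  have hle : Ideal.torsionOf R K k ≤ LinearMap.ker (Algebra.linearMap R (ResidueField R)) :=
    fun a ha => LinearMap.mem_ker.mpr <| (residue_eq_zero_iff a).mpr <|
      le_maximalIdeal (mt (Ideal.torsionOf_eq_top_iff R k).mp hk) ha
  let φ : (R ∙ k) →ₗ[R] E := κ ∘ₗ (Ideal.torsionOf R K k).liftQ _ hle ∘ₗ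
    (Ideal.quotTorsionOfEquivSpanSingleton R K k).symm.toLinearMap
  obtain ⟨ψ, hψ⟩ := Module.Injective.extension_property R E _ _ (R ∙ k).subtype
    (Submodule.injective_subtype _) φ
  have hψk : ψ k = κ 1 := by
    have hmk : (Ideal.quotTorsionOfEquivSpanSingleton R K k).symm
        ⟨k, Submodule.mem_span_singleton_self k⟩ = Submodule.Quotient.mk 1 := by
      rw [LinearEquiv.symm_apply_eq, Ideal.quotTorsionOfEquivSpanSingleton_apply_mk, one_smul]
    have := LinearMap.congr_fun hψ ⟨k, Submodule.mem_span_singleton_self k⟩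
    simp only [LinearMap.coe_comp, Function.comp_apply, Submodule.subtype_apply, φ,
      LinearEquiv.coe_coe, hmk, Submodule.liftQ_apply] at this
    exact this
  exact ⟨ψ, hψk ▸ (map_ne_zero_iff κ hκ).mpr one_ne_zero⟩

lemma Submodule.FG.exists_le_of_le_iSup {Q : Submodule R E} (hQ : Q.FG) {ι : Type*} [Nonempty ι]
    {F : ι → Submodule R E} (hdir : Directed (· ≤ ·) F) (hQF : Q ≤ ⨆ i, F i) :
    ∃ i, Q ≤ F i := by
  obtain ⟨_, ⟨i, rfl⟩, hi⟩ :=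
    (CompleteLattice.isCompactElement_iff_le_of_directed_sSup_le _ Q).mp
      ((Submodule.fg_iff_compact Q).mp hQ) (Set.range F) (Set.range_nonempty F)
      hdir.directedOn_range hQF
  exact ⟨i, hi⟩

variable {M : Type*} [AddCommGroup M] [Module R M]

lemma exists_tmul_eq_zero_of_directed {ι : Type*} [Nonempty ι] {F : ι → Submodule R E}
    (hdir : Directed (· ≤ ·) F) (hcover : ∀ e, ∃ i, e ∈ F i) {x : M} {e : E}
    (hxe : x ⊗ₜ[R] e = 0) : ∃ i, ∃ he : e ∈ F i, x ⊗ₜ[R] (⟨e, he⟩ : F i) = 0 := by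
  let P := R ∙ e
  have hPe : e ∈ P := Submodule.mem_span_singleton_self e
  have hvan : LinearMap.rTensor M P.subtype ((⟨e, hPe⟩ : P) ⊗ₜ x) = 0 := by
    rw [LinearMap.rTensor_tmul, Submodule.subtype_apply, ← comm_tmul, hxe, map_zero]
  obtain ⟨Q, hPQ, hQ, hQvan⟩ :=
    TensorProduct.eq_zero_of_fg_of_subtype_eq_zero (Submodule.fg_span_singleton e) hvan
  obtain ⟨i, hQi⟩ := hQ.exists_le_of_le_iSup hdir fun q _ =>
    (hcover q).elim fun i hi => Submodule.mem_iSup_of_mem i hi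
  refine ⟨i, hQi (hPQ hPe), ?_⟩
  have := congrArg (TensorProduct.comm R _ M ∘ LinearMap.rTensor M (Submodule.inclusion hQi)) hQvan
  simp only [Function.comp_apply, LinearMap.rTensor_tmul, comm_tmul, map_zero] at this
  exact this

lemma exists_notMem_smul_mem_of_tmul_eq_zero {ι : Type*} [Nonempty ι] {I : ι → Ideal R}
    (j : ∀ i, (R ⧸ I i) →ₗ[R] E) (hj : ∀ i, Function.Injective (j i))
    (hdir : Directed (· ≤ ·) fun i => LinearMap.range (j i))
    (hcover : ∀ e, ∃ i, e ∈ LinearMap.range (j i)) {x : M} {e : E} (he : e ≠ 0)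
    (hxe : x ⊗ₜ[R] e = 0) : ∃ i, ∃ r ∉ I i, r • x ∈ I i • (⊤ : Submodule R M) := by
  obtain ⟨i, hei, hvan⟩ := exists_tmul_eq_zero_of_directed hdir hcover hxe
  obtain ⟨q, hq⟩ := id hei
  obtain ⟨r, rfl⟩ := Ideal.Quotient.mk_surjective q
  let eqv := LinearEquiv.ofInjective (j i) (hj i)
  have heqv : eqv.symm ⟨e, hei⟩ = Ideal.Quotient.mk (I i) r := by
    rw [LinearEquiv.symm_apply_eq]
    exact Subtype.ext hq.symm
  refine ⟨i, r, fun hr => he ?_, (tmul_mk_eq_zero_iff_smul_mem (I i) x r).mp ?_⟩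
  · rw [← hq, Ideal.Quotient.eq_zero_iff_mem.mpr hr, map_zero]
  · simpa [heqv] using congrArg (LinearMap.lTensor M eqv.symm.toLinearMap) hvan

end InjectiveHull

theorem nonpure_locus_eq_iUnion_colon_general {R : Type u} [CommRing R]
    [IsLocalRing R] (I : ℕ → Ideal R) (u : ℕ → R) (hI : Antitone I)
    (hprimary : ∀ t, ∃ k : ℕ, IsLocalRing.maximalIdeal R ^ k ≤ I t)
    (hGor : ∀ t, u t ∉ I t ∧
      (I t).colon (IsLocalRing.maximalIdeal R) = I t ⊔ Ideal.span {u t})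
    -- the injective hull `E` of the residue field, realized as the colimit of the `R/I_t`
    (E : Type u) [AddCommGroup E] [Module R E] [Module.Injective R E]
    (κ : IsLocalRing.ResidueField R →ₗ[R] E) (hκinj : Function.Injective κ)
    (ι : ∀ t, (R ⧸ I t) →ₗ[R] E) (hιinj : ∀ t, Function.Injective (ι t))
    (hann : ∀ t, (LinearMap.range (ι t) : Set E) = {e : E | ∀ a ∈ I t, a • e = 0})
    (hcolim : ∀ e : E, ∃ t, e ∈ LinearMap.range (ι t))
    (M : Type u) [AddCommGroup M] [Module R M] :
    {x : M | ¬ IsPureMap (LinearMap.toSpanSingleton R M x)} =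
      ⋃ t, {x : M | u t • x ∈ I t • (⊤ : Submodule R M)} := by
  have hmono : Monotone fun t => LinearMap.range (ι t) := fun s t hst e he => by
    rw [← SetLike.mem_coe, hann] at he ⊢
    exact fun a ha => he a (hI hst ha)
  ext x
  simp only [Set.mem_ofPred_eq, Set.mem_iUnion]
  constructor
  · intro hx
    obtain ⟨K, _, _, k, hxk, hk⟩ : ∃ (K : Type u) (_ : AddCommGroup K) (_ : Module R K) (k : K),
        x ⊗ₜ[R] k = 0 ∧ k ≠ 0 := by
      simpa [isPureMap_toSpanSingleton_iff] using hx
    obtain ⟨ψ, hψ⟩ := exists_linearMap_apply_ne_zero κ hκinj hk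
    obtain ⟨t, r, hr, hrx⟩ := exists_notMem_smul_mem_of_tmul_eq_zero ι hιinj hmono.directed_le
      hcolim hψ (by simpa using congrArg (LinearMap.lTensor M ψ) hxk)
    exact ⟨t, smul_mem_smul_top_of_mem_sup_span_singleton
      (mem_sup_span_singleton_of_notMem (hprimary t) (hGor t).2 hr) hrx⟩
  · rintro ⟨t, hxt⟩
    exact not_isPureMap_toSpanSingleton_of_smul_mem (hGor t).1 hxt

/-- Let `(R, m)` be a Noetherian local ring, `M` an `R`-module, and `(I_t)` a descending
chain of `m`-primary ideals, cofinal with the powers of `m`, such that each `R/I_t` is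
Gorenstein Artinian with socle generated by the image of `u_t ∈ R`, and such that the
injective hull `E = E_R(k)` of the residue field is the colimit (union) of the submodules
`Ann_E(I_t) ≅ R/I_t`.  Then the set `N = {x ∈ M : R → M, 1 ↦ x, is not pure}` equals
the union over `t` of the submodules `(I_t M :_M u_t)`. -/
theorem nonpure_locus_eq_iUnion_colon {R : Type u} [CommRing R] [IsNoetherianRing R]
    [IsLocalRing R] (I : ℕ → Ideal R) (u : ℕ → R) (hI : Antitone I)
    (hprimary : ∀ t, ∃ k : ℕ, IsLocalRing.maximalIdeal R ^ k ≤ I t)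
    (hcofinal : ∀ n : ℕ, ∃ t, I t ≤ IsLocalRing.maximalIdeal R ^ n)
    (hGor : ∀ t, u t ∉ I t ∧
      (I t).colon (IsLocalRing.maximalIdeal R) = I t ⊔ Ideal.span {u t})
    -- the injective hull `E` of the residue field, realized as the colimit of the `R/I_t`
    (E : Type u) [AddCommGroup E] [Module R E] [Module.Injective R E]
    (κ : IsLocalRing.ResidueField R →ₗ[R] E) (hκinj : Function.Injective κ)
    (hess : ∀ P : Submodule R E, P ≠ ⊥ → P ⊓ LinearMap.range κ ≠ ⊥)
    (ι : ∀ t, (R ⧸ I t) →ₗ[R] E) (hιinj : ∀ t, Function.Injective (ι t))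
    (hann : ∀ t, (LinearMap.range (ι t) : Set E) = {e : E | ∀ a ∈ I t, a • e = 0})
    (hcolim : ∀ e : E, ∃ t, e ∈ LinearMap.range (ι t))
    (M : Type u) [AddCommGroup M] [Module R M] :
    {x : M | ¬ IsPureMap (LinearMap.toSpanSingleton R M x)} =
      ⋃ t, {x : M | u t • x ∈ I t • (⊤ : Submodule R M)} :=
  nonpure_locus_eq_iUnion_colon_general I u hI hprimary hGor E κ hκinj ι hιinj hann hcolim M
end

section
/- Let (R, m) be a Noetherian local ring of characteristic p > 0 with I_e defined as the e-th Frobenius non-splitting ideal. Then for all e, f ≥ 0, I_e^{[p^f]} ⊆ I_{e+f}. -/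
universe u

/-- `Twist R p e` is the `R`-module `R^{1/p^e}`: as an abelian group it is a copy of `R`, but
`a : R` acts by `a • x = a^{p^e} * x` (the transport of the usual module structure along the
identification `R^{1/p^e} ≅ R`, `y ↦ y^{p^e}`, valid for a domain of characteristic `p`). -/
def Twist (R : Type u) (_p _e : ℕ) : Type u := R

/-- The identification `R → Twist R p e` sending `x` to (the element corresponding to)
`x^{1/p^e}`. -/
def Twist.of {R : Type u} {p e : ℕ} (x : R) : Twist R p e := x

instance {R : Type u} [CommRing R] {p e : ℕ} : AddCommGroup (Twist R p e) :=
  inferInstanceAs (AddCommGroup R)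

instance {R : Type u} [CommRing R] {p e : ℕ} [ExpChar R p] : Module R (Twist R p e) :=
  Module.compHom R (iterateFrobenius R p e)

/-- The `e`-th Frobenius non-splitting ideal
`I_e = {x ∈ R : φ(x^{1/p^e}) ∈ m for all φ ∈ Hom_R(R^{1/p^e}, R)}`. -/
def frobSplittingIdeal (R : Type u) [CommRing R] [IsLocalRing R] (p : ℕ) [ExpChar R p]
    (e : ℕ) : Set R :=
  {x : R | ∀ φ : Twist R p e →ₗ[R] R, φ (Twist.of x) ∈ IsLocalRing.maximalIdeal R}


namespace FrobAux

variable {R : Type u} [CommRing R] {p : ℕ}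

/-- The identity map `Twist R p e → R`. -/
def Twist.un {e : ℕ} (x : Twist R p e) : R := x

lemma twist_smul [ExpChar R p] {e : ℕ} (r : R) (x : Twist R p e) :
    r • x = Twist.of (r ^ p ^ e * Twist.un x) := rfl

lemma of_un {e : ℕ} (x : Twist R p e) : Twist.of (Twist.un x) = x := rfl

lemma un_of {e : ℕ} (x : R) : Twist.un (Twist.of x : Twist R p e) = x := rfl

lemma of_add {e : ℕ} (x y : R) :
    (Twist.of (x + y) : Twist R p e) = Twist.of x + Twist.of y := rfl

variable [IsLocalRing R] [ExpChar R p]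

/-- `frobSplittingIdeal` as an ideal. -/
def frobIdeal (e : ℕ) : Ideal R where
  carrier := frobSplittingIdeal R p e
  zero_mem' := fun φ => by
    show φ 0 ∈ _
    rw [map_zero]; exact Ideal.zero_mem _
  add_mem' := fun {a b} ha hb φ => by
    rw [of_add, map_add]
    exact Ideal.add_mem _ (ha φ) (hb φ)
  smul_mem' := fun r x hx φ => by
    let ψ : Twist R p e →ₗ[R] R :=
      { toFun := fun y => φ (Twist.of (r * Twist.un y))
        map_add' := fun a b => by
          show φ (Twist.of (r * (Twist.un a + Twist.un b))) = _
          rw [mul_add, of_add, map_add]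
        map_smul' := fun a y => by
          show φ (Twist.of (r * Twist.un (a • y))) = a * φ (Twist.of (r * Twist.un y))
          rw [twist_smul, un_of, mul_left_comm]
          calc φ (Twist.of (a ^ p ^ e * (r * Twist.un y)))
              = φ (a • Twist.of (r * Twist.un y)) := by rw [twist_smul, un_of]
            _ = a * φ (Twist.of (r * Twist.un y)) := by rw [map_smul]; rfl }
    exact hx ψ

lemma pow_mem {e : ℕ} (f : ℕ) {x : R} (hx : x ∈ frobSplittingIdeal R p e) [Fact p.Prime]
    [CharP R p] : x ^ p ^ f ∈ frobSplittingIdeal R p (e + f) := by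
  intro φ
  let ψ : Twist R p e →ₗ[R] R :=
    { toFun := fun y => φ (Twist.of (Twist.un y ^ p ^ f))
      map_add' := fun a b => by
        show φ (Twist.of ((Twist.un a + Twist.un b) ^ p ^ f)) = _
        rw [add_pow_char_pow, of_add, map_add]
      map_smul' := fun a y => by
        show φ (Twist.of (Twist.un (a • y) ^ p ^ f)) = a * φ (Twist.of (Twist.un y ^ p ^ f))
        rw [twist_smul, un_of, mul_pow, ← pow_mul, ← pow_add]
        calc φ (Twist.of (a ^ p ^ (e + f) * Twist.un y ^ p ^ f))
            = φ (a • Twist.of (Twist.un y ^ p ^ f)) := by rw [twist_smul, un_of]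
          _ = a * φ (Twist.of (Twist.un y ^ p ^ f)) := by rw [map_smul]; rfl }
  exact hx ψ

end FrobAux

/-- Let `(R, m)` be a Noetherian local domain of characteristic `p > 0` with Frobenius
non-splitting ideals `I_e`.  Then for all `e, f ≥ 0`, `I_e^{[p^f]} ⊆ I_{e+f}`, where
`I_e^{[p^f]}` is the ideal generated by the `p^f`-th powers of elements of `I_e`. -/
theorem frobeniusPower_frobSplittingIdeal_subset (R : Type u) [CommRing R]
    [IsDomain R] [IsNoetherianRing R] [IsLocalRing R] (p : ℕ) [Fact p.Prime] [CharP R p]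
    [ExpChar R p] (e f : ℕ) :
    ↑(Ideal.span ((fun a => a ^ p ^ f) '' frobSplittingIdeal R p e)) ⊆
      frobSplittingIdeal R p (e + f) := by
  intro x hx
  have h : Ideal.span ((fun a => a ^ p ^ f) '' frobSplittingIdeal R p e) ≤
      FrobAux.frobIdeal (R := R) (p := p) (e + f) := by
    rw [Ideal.span_le]
    rintro _ ⟨a, ha, rfl⟩
    exact FrobAux.pow_mem f ha
  exact h hx
end

section
/- Let (R, m) be a Noetherian local ring of characteristic p > 0 with Frobenius non-splitting ideals I_e. Then for any φ ∈ Hom_R(R^{1/p^f}, R) one has φ(I_{e+f}^{1/p^f}) ⊆ I_e. -/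
universe u

/-- The identification `Twist R p e → R`. -/
def Twist.toR {R : Type u} {p e : ℕ} (x : Twist R p e) : R := x

/-- A map `φ : R^{1/p^f} → R` induces a map `R^{1/p^{e+f}} → R^{1/p^e}` with the same
underlying function. -/
def Twist.shift {R : Type u} [CommRing R] {p : ℕ} [ExpChar R p] {e f : ℕ}
    (φ : Twist R p f →ₗ[R] R) : Twist R p (e + f) →ₗ[R] Twist R p e where
  toFun y := Twist.of (φ (Twist.of (Twist.toR y)))
  map_add' a b := φ.map_add a b
  map_smul' a y := by
    have h : iterateFrobenius R p (e + f) a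
        = iterateFrobenius R p f (iterateFrobenius R p e a) := by
      simp [iterateFrobenius_def, ← pow_mul, pow_add, mul_comm]
    show φ (Twist.of (iterateFrobenius R p (e + f) a * Twist.toR y))
      = iterateFrobenius R p e a * φ (Twist.of (Twist.toR y))
    rw [h]
    exact φ.map_smul (iterateFrobenius R p e a) (Twist.of (Twist.toR y))

/-- Let `(R, m)` be a Noetherian local domain of characteristic `p > 0` with Frobenius
non-splitting ideals `I_e`.  Then for any `φ ∈ Hom_R(R^{1/p^f}, R)` one has
`φ(I_{e+f}^{1/p^f}) ⊆ I_e`.  (Under the identification `R^{1/p^f} ≅ Twist R p f`, the set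
`I_{e+f}^{1/p^f}` of `p^f`-th roots of elements of `I_{e+f}` corresponds to the image of
`I_{e+f}` under `Twist.of`.) -/
theorem apply_frobSplittingIdeal_subset (R : Type u) [CommRing R]
    [IsDomain R] [IsNoetherianRing R] [IsLocalRing R] (p : ℕ) [Fact p.Prime] [CharP R p]
    [ExpChar R p] (e f : ℕ) (φ : Twist R p f →ₗ[R] R) :
    ∀ x ∈ frobSplittingIdeal R p (e + f), φ (Twist.of x) ∈ frobSplittingIdeal R p e := by
  intro x hx ψ
  exact hx (ψ.comp (Twist.shift φ))
end

section
/- Normalized length commutes with filtered colimits along injective transition maps: if (M_i) is a filtered system of m_A-power-torsion A_∞,0^{nc}-modules with injective transition maps, then λ_∞(colim_i M_i) = lim_i λ_∞(M_i) = sup_i λ_∞(M_i). -/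
universe u

open IsLocalRing

/-- The length of an `R`-module `M`, valued in `ℝ≥0∞`: the supremum of the lengths of chains
of submodules of `M`. -/
noncomputable def moduleLength (R M : Type*) [Semiring R] [AddCommGroup M] [Module R M] :
    ENNReal :=
  ⨆ s : LTSeries (Submodule R M), (s.length : ENNReal)

/-- The `n`-th level `A_n = A[x_1^{1/pⁿ}, …, x_d^{1/pⁿ}]` of the tower whose union is
`A_∞,0^{nc}`, realized as the subalgebra of `B` generated by the chosen compatible
`pⁿ`-th roots `ξ i n` of the regular system of parameters. -/
noncomputable def rootLevel (A B : Type u) [CommRing A] [CommRing B] [Algebra A B]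
    {d : ℕ} (ξ : Fin d → ℕ → B) (n : ℕ) : Subalgebra A B :=
  Algebra.adjoin A (Set.range fun i => ξ i n)

/-- For a `B`-module `M` and a set `S ⊆ M` of generators, the `A`-submodule `S·A_n`
generated by all `A_n`-multiples of elements of `S`. -/
noncomputable def levelSpan (A B : Type u) [CommRing A] [CommRing B] [Algebra A B]
    {d : ℕ} (ξ : Fin d → ℕ → B) (n : ℕ) (M : Type u) [AddCommGroup M] [Module A M]
    [Module B M] (S : Set M) : Submodule A M :=
  Submodule.span A {y : M | ∃ b ∈ rootLevel A B ξ n, ∃ s ∈ S, y = b • s}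

/-- **Faltings' normalized length** of an `A_∞,0^{nc}`-module `M` (where
`B = A_∞,0^{nc} = ∪ₙ Aₙ`): the supremum, over finitely generated `B`-submodules `N` of `M`,
of the infimum over finite generating sets `S` of `N` and levels `n` of
`length_A(S·A_n)/p^{nd}`. -/
noncomputable def normalizedLength (A B : Type u) [CommRing A] [CommRing B] [Algebra A B]
    (p : ℕ) {d : ℕ} (ξ : Fin d → ℕ → B) (M : Type u) [AddCommGroup M] [Module A M]
    [Module B M] : ENNReal :=
  ⨆ (N : Submodule B M) (_ : N.FG),
    ⨅ (S : Finset M) (_ : Submodule.span B (S : Set M) = N) (n : ℕ),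
      moduleLength A ↥(levelSpan A B ξ n M (S : Set M)) / (p : ENNReal) ^ (n * d)

lemma moduleLength_le_of_injective {R M N : Type*} [Semiring R] [AddCommGroup M]
    [AddCommGroup N] [Module R M] [Module R N] (f : M →ₗ[R] N)
    (hf : Function.Injective f) : moduleLength R M ≤ moduleLength R N := by
  refine iSup_le fun s => ?_
  have hmono : Monotone (Submodule.map f) := fun _ _ h => Submodule.map_mono h
  have hm : StrictMono (Submodule.map f) :=
    hmono.strictMono_of_injective (Submodule.map_injective_of_injective hf)
  exact le_iSup_of_le (s.map _ hm) (by simp)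

lemma moduleLength_congr {R M N : Type*} [Semiring R] [AddCommGroup M]
    [AddCommGroup N] [Module R M] [Module R N] (e : M ≃ₗ[R] N) :
    moduleLength R M = moduleLength R N :=
  le_antisymm (moduleLength_le_of_injective e.toLinearMap e.injective)
    (moduleLength_le_of_injective e.symm.toLinearMap e.symm.injective)

lemma levelSpan_image (A B : Type u) [CommRing A] [CommRing B] [Algebra A B]
    {d : ℕ} (ξ : Fin d → ℕ → B) (n : ℕ) (M₁ M₂ : Type u) [AddCommGroup M₁] [Module A M₁]
    [Module B M₁] [IsScalarTower A B M₁] [AddCommGroup M₂] [Module A M₂] [Module B M₂]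
    [IsScalarTower A B M₂] (f : M₁ →ₗ[B] M₂) (S : Set M₁) :
    levelSpan A B ξ n M₂ (f '' S) = (levelSpan A B ξ n M₁ S).map (f.restrictScalars A) := by
  unfold levelSpan
  rw [Submodule.map_span]
  congr 1
  ext y
  constructor
  · rintro ⟨b, hb, s, ⟨s₀, hs₀, rfl⟩, rfl⟩
    exact ⟨b • s₀, ⟨b, hb, s₀, hs₀, rfl⟩, (map_smul f b s₀)⟩
  · rintro ⟨z, ⟨b, hb, s, hs, rfl⟩, rfl⟩
    exact ⟨b, hb, f s, ⟨s, hs, rfl⟩, (map_smul f b s)⟩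

lemma moduleLength_levelSpan_image (A B : Type u) [CommRing A] [CommRing B] [Algebra A B]
    {d : ℕ} (ξ : Fin d → ℕ → B) (n : ℕ) (M₁ M₂ : Type u) [AddCommGroup M₁] [Module A M₁]
    [Module B M₁] [IsScalarTower A B M₁] [AddCommGroup M₂] [Module A M₂] [Module B M₂]
    [IsScalarTower A B M₂] (f : M₁ →ₗ[B] M₂) (hf : Function.Injective f) (S : Set M₁) :
    moduleLength A ↥(levelSpan A B ξ n M₂ (f '' S)) =
      moduleLength A ↥(levelSpan A B ξ n M₁ S) := by
  rw [levelSpan_image A B ξ n M₁ M₂ f S]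
  exact (moduleLength_congr
    (Submodule.equivMapOfInjective (f.restrictScalars A) hf (levelSpan A B ξ n M₁ S))).symm

lemma inner_map_eq (A B : Type u) [CommRing A] [CommRing B] [Algebra A B] (p : ℕ)
    {d : ℕ} (ξ : Fin d → ℕ → B) (M₁ M₂ : Type u) [AddCommGroup M₁] [Module A M₁]
    [Module B M₁] [IsScalarTower A B M₁] [AddCommGroup M₂] [Module A M₂] [Module B M₂]
    [IsScalarTower A B M₂] (f : M₁ →ₗ[B] M₂) (hf : Function.Injective f)
    (N : Submodule B M₁) :
    (⨅ (S : Finset M₂) (_ : Submodule.span B (S : Set M₂) = N.map f) (n : ℕ),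
        moduleLength A ↥(levelSpan A B ξ n M₂ (S : Set M₂)) / (p : ENNReal) ^ (n * d)) =
    ⨅ (S : Finset M₁) (_ : Submodule.span B (S : Set M₁) = N) (n : ℕ),
        moduleLength A ↥(levelSpan A B ξ n M₁ (S : Set M₁)) / (p : ENNReal) ^ (n * d) := by
  classical
  apply le_antisymm
  · refine le_iInf fun S₀ => le_iInf fun hS₀ => le_iInf fun n => ?_
    have hspan : Submodule.span B ((S₀.image f : Finset M₂) : Set M₂) = N.map f := by
      rw [Finset.coe_image, Submodule.span_image, hS₀]
    refine iInf_le_of_le (S₀.image f) (iInf_le_of_le hspan (iInf_le_of_le n (le_of_eq ?_)))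
    rw [Finset.coe_image, moduleLength_levelSpan_image A B ξ n M₁ M₂ f hf]
  · refine le_iInf fun S => le_iInf fun hS => le_iInf fun n => ?_
    have hsub : (S : Set M₂) ⊆ Set.range f := fun s hs => by
      have : s ∈ N.map f := hS ▸ Submodule.subset_span hs
      obtain ⟨m, _, rfl⟩ := this
      exact ⟨m, rfl⟩
    set S₀ : Finset M₁ := S.preimage f (hf.injOn) with hS₀def
    have hS₀coe : (S₀ : Set M₁) = f ⁻¹' (S : Set M₂) := Finset.coe_preimage _ _
    have himg : f '' (S₀ : Set M₁) = (S : Set M₂) := by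
      rw [hS₀coe, Set.image_preimage_eq_of_subset hsub]
    have hspan : Submodule.span B (S₀ : Set M₁) = N := by
      apply Submodule.map_injective_of_injective hf
      rw [← Submodule.span_image, himg, hS]
    refine iInf_le_of_le S₀ (iInf_le_of_le hspan (iInf_le_of_le n (le_of_eq ?_)))
    rw [← himg, moduleLength_levelSpan_image A B ξ n M₁ M₂ f hf]

/-- **Normalized length commutes with filtered colimits along injective transition maps**:
if `(M_i)` is a filtered system of `m_A`-power-torsion `A_∞,0^{nc}`-modules with injective
transition maps, then `λ_∞(colim_i M_i) = lim_i λ_∞(M_i) = sup_i λ_∞(M_i)`.  The colimit is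
presented concretely as a module `M` together with compatible injective maps `g i : M i → M`
whose ranges cover `M`. -/
theorem normalizedLength_colimit_injective
    (A B : Type u) [CommRing A] [IsNoetherianRing A] [IsLocalRing A]
    [IsAdicComplete (maximalIdeal A) A] (p : ℕ) [Fact p.Prime]
    [CharP (ResidueField A) p] [ExpChar (ResidueField A) p] [PerfectRing (ResidueField A) p]
    [CommRing B] [Algebra A B] (hinj : Function.Injective (algebraMap A B))
    (d : ℕ) (hdim : ringKrullDim A = d) (x : Fin d → A)
    (hx : Ideal.span (Set.range x) = maximalIdeal A)
    (ξ : Fin d → ℕ → B) (hξ0 : ∀ i, ξ i 0 = algebraMap A B (x i))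
    (hξ : ∀ i n, ξ i (n + 1) ^ p = ξ i n)
    (hunion : ∀ b : B, ∃ n, b ∈ rootLevel A B ξ n)
    (hfree : ∀ n, Module.Free A ↥(rootLevel A B ξ n) ∧
      Module.finrank A ↥(rootLevel A B ξ n) = p ^ (n * d))
    (ι : Type u) [Preorder ι] [IsDirected ι (· ≤ ·)] [Nonempty ι]
    (Mod : ι → Type u) [∀ i, AddCommGroup (Mod i)] [∀ i, Module A (Mod i)]
    [∀ i, Module B (Mod i)] [∀ i, IsScalarTower A B (Mod i)]
    (htor : ∀ i, ∃ k : ℕ, ∀ a ∈ maximalIdeal A ^ k, ∀ m : Mod i, a • m = 0)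
    (t : ∀ i j, i ≤ j → (Mod i →ₗ[B] Mod j))
    (ht_id : ∀ i, t i i le_rfl = LinearMap.id)
    (ht_comp : ∀ i j k (hij : i ≤ j) (hjk : j ≤ k),
      (t j k hjk).comp (t i j hij) = t i k (hij.trans hjk))
    (ht_inj : ∀ i j (hij : i ≤ j), Function.Injective (t i j hij))
    (M : Type u) [AddCommGroup M] [Module A M] [Module B M] [IsScalarTower A B M]
    (g : ∀ i, Mod i →ₗ[B] M)
    (hg_compat : ∀ i j (hij : i ≤ j), (g j).comp (t i j hij) = g i)
    (hg_inj : ∀ i, Function.Injective (g i))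
    (hg_cover : ∀ m : M, ∃ i, m ∈ LinearMap.range (g i)) :
    normalizedLength A B p ξ M = ⨆ i, normalizedLength A B p ξ (Mod i) := by
  classical
  have hrange_mono : ∀ j i (hij : j ≤ i), LinearMap.range (g j) ≤ LinearMap.range (g i) := by
    intro j i hij
    rw [← hg_compat j i hij]
    exact LinearMap.range_comp_le_range _ _
  unfold normalizedLength
  apply le_antisymm
  · refine iSup_le fun N => iSup_le fun hN => ?_
    obtain ⟨S, hS⟩ := hN
    choose idx hidx using hg_cover
    obtain ⟨i, hi⟩ := (S.image idx).exists_le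
    have hsub : N ≤ LinearMap.range (g i) := by
      rw [← hS]
      refine Submodule.span_le.mpr fun s hs => ?_
      exact hrange_mono (idx s) i (hi _ (Finset.mem_image_of_mem idx hs)) (hidx s)
    have hmap : (N.comap (g i)).map (g i) = N := by
      rw [Submodule.map_comap_eq, inf_eq_right.mpr hsub]
    have hN₀fg : (N.comap (g i)).FG := Submodule.fg_of_fg_map_injective (g i) (hg_inj i)
      (by rw [hmap]; exact ⟨S, hS⟩)
    refine le_trans ?_ (le_iSup _ i)
    refine le_iSup₂_of_le (N.comap (g i)) hN₀fg ?_
    conv_lhs => rw [← hmap]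
    exact (inner_map_eq A B p ξ (Mod i) M (g i) (hg_inj i) (N.comap (g i))).le
  · refine iSup_le fun i => iSup_le fun N => iSup_le fun hN => ?_
    refine le_iSup₂_of_le (N.map (g i)) (hN.map _) ?_
    exact (inner_map_eq A B p ξ (Mod i) M (g i) (hg_inj i) N).ge
end

section
/- Normalized length commutes with filtered colimits along surjective transition maps of finite normalized length: if (M_i) is a filtered system of m_A-power-torsion A_∞,0^{nc}-modules with surjective transition maps and λ_∞(M_i) < ∞ for every i, then λ_∞(colim_i M_i) = lim_i λ_∞(M_i) = inf_i λ_∞(M_i). -/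
universe u

open IsLocalRing

/-! Write `λ(S) = infₙ length_A(S·Aₙ)/p^{nd}` for a finite set `S` of a module; the sequence is
antitone because `A_{n+1}` is spanned over `Aₙ` by `p^d` monomials, `λ(S)` only depends on the
`B`-span of `S`, and `λ_∞(M)` is the supremum of `λ(S)` over finite `S`. Additivity of length
along the kernel of a surjection `f : M → M'` gives `λ_∞(M') + λ(S) ≤ λ_∞(M) + λ(f S)`.

For the colimit fix `i` and a finite `S ⊆ Mᵢ`. At each level `n` the kernel of `S·Aₙ → M` is a
finitely generated `A`-module (`A` is Noetherian and `Aₙ` is finite over `A`), so it already dies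
in some `Mⱼ`, where the image of `S·Aₙ` then maps isomorphically onto its image in `M`. This gives
`infⱼ λ_∞(Mⱼ) + λ(S) ≤ λ_∞(Mᵢ) + λ(gᵢ S)`; taking the supremum over `S` and cancelling the finite
`λ_∞(Mᵢ)` yields `infⱼ λ_∞(Mⱼ) ≤ λ_∞(M)`. The reverse inequality is monotonicity under
surjections. -/

section Length

variable {R M N : Type*} [Ring R] [AddCommGroup M] [Module R M] [AddCommGroup N] [Module R N]

variable (R M) in
theorem moduleLength_eq_length :
    moduleLength R M = Module.length R M := by
  have h : Module.length R M = ⨆ s : LTSeries (Submodule R M), (s.length : ℕ∞) := by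
    apply WithBot.coe_injective
    rw [Module.coe_length, Order.krullDim_eq_iSup_length]
  simp [moduleLength, h]

theorem Submodule.length_eq_length_ker_inf_add_length_map (h : M →ₗ[R] N) (V : Submodule R M) :
    Module.length R V = Module.length R ↥(LinearMap.ker h ⊓ V) + Module.length R (V.map h) := by
  refine Module.length_eq_add_of_exact (Submodule.inclusion inf_le_right) (h.submoduleMap V)
    (Submodule.inclusion_injective _) (h.submoduleMap_surjective V) fun v => ?_
  simp only [Subtype.ext_iff, LinearMap.submoduleMap_coe_apply, Submodule.coe_zero,
    Set.mem_range, Submodule.coe_inclusion]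
  exact ⟨fun hv => ⟨⟨v, hv, v.2⟩, rfl⟩, fun ⟨w, hw⟩ => hw ▸ w.2.1⟩

theorem Submodule.length_map_add_le_of_le (h : M →ₗ[R] N) {V W : Submodule R M} (hVW : V ≤ W) :
    Module.length R (W.map h) + Module.length R V
      ≤ Module.length R W + Module.length R (V.map h) := by
  have hker : Module.length R ↥(LinearMap.ker h ⊓ V) ≤ Module.length R ↥(LinearMap.ker h ⊓ W) :=
    Module.length_le_of_injective _ (Submodule.inclusion_injective (inf_le_inf_left _ hVW))
  rw [V.length_eq_length_ker_inf_add_length_map h, W.length_eq_length_ker_inf_add_length_map h]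
  calc _ ≤ Module.length R (W.map h) + (Module.length R ↥(LinearMap.ker h ⊓ W)
        + Module.length R (V.map h)) := by gcongr
    _ = _ := by ring

theorem Submodule.length_map_comp_eq {P : Type*} [AddCommGroup P] [Module R P]
    (h₁ : M →ₗ[R] N) (h₂ : N →ₗ[R] P) (V : Submodule R M)
    (hker : LinearMap.ker (h₂ ∘ₗ h₁) ⊓ V ≤ LinearMap.ker h₁) :
    Module.length R (V.map (h₂ ∘ₗ h₁)) = Module.length R (V.map h₁) := by
  have hbot : LinearMap.ker h₂ ⊓ V.map h₁ = ⊥ := by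
    refine eq_bot_iff.2 ?_
    rintro _ ⟨hw, v, hv, rfl⟩
    exact hker ⟨hw, hv⟩
  rw [(V.map h₁).length_eq_length_ker_inf_add_length_map h₂, hbot, Module.length_bot, zero_add,
    Submodule.map_comp]

theorem Module.length_le_card_mul_of_le_iSup_map {ι : Type*} [Fintype ι] (f : ι → M →ₗ[R] N)
    (V : Submodule R M) {W : Submodule R N} (hW : W ≤ ⨆ i, V.map (f i)) :
    Module.length R W ≤ Fintype.card ι * Module.length R V := by
  classical
  let Φ : (ι → V) →ₗ[R] N := LinearMap.lsum R (fun _ => V) ℕ fun i => f i ∘ₗ V.subtype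
  have hrange : W ≤ LinearMap.range Φ := hW.trans <| iSup_le fun i => by
    rintro _ ⟨v, hv, rfl⟩
    exact ⟨Pi.single i ⟨v, hv⟩, by simp [Φ, Pi.single_apply, apply_ite]⟩
  calc Module.length R W ≤ Module.length R (LinearMap.range Φ) :=
        Module.length_le_of_injective _ (Submodule.inclusion_injective hrange)
    _ ≤ Module.length R (ι → V) := Module.length_le_of_surjective _ Φ.surjective_rangeRestrict
    _ = _ := by simp

end Length

section Levels

variable {A B : Type u} [CommRing A] [CommRing B] [Algebra A B] {d : ℕ} {ξ : Fin d → ℕ → B}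
  {p : ℕ}

theorem rootLevel_mono (hξ : ∀ i n, ξ i (n + 1) ^ p = ξ i n) : Monotone (rootLevel A B ξ) := by
  refine monotone_nat_of_le_succ fun n => Algebra.adjoin_le ?_
  rintro _ ⟨i, rfl⟩
  show ξ i n ∈ _
  rw [← hξ i n]
  exact pow_mem (Algebra.subset_adjoin (Set.mem_range_self i)) p

variable (ξ) in
noncomputable def levelMonomial (n : ℕ) (a : Fin d → ℕ) : B := ∏ i, ξ i (n + 1) ^ a i

theorem rootLevel_succ_le_span (hξ : ∀ i n, ξ i (n + 1) ^ p = ξ i n) (hp : 0 < p) (n : ℕ) :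
    Subalgebra.toSubmodule (rootLevel A B ξ (n + 1)) ≤ Submodule.span A
      {y | ∃ a : Fin d → Fin p, ∃ c ∈ rootLevel A B ξ n, y = levelMonomial ξ n (a ·) * c} := by
  rw [rootLevel, Algebra.adjoin_eq_span, Submodule.span_le]
  intro _ hy
  obtain ⟨e, rfl⟩ := Submonoid.mem_closure_range_iff_of_fintype.1 hy
  refine Submodule.subset_span ⟨fun i => ⟨e i % p, Nat.mod_lt _ hp⟩, ∏ i, ξ i n ^ (e i / p),
    prod_mem fun i _ => pow_mem (Algebra.subset_adjoin (Set.mem_range_self i)) _, ?_⟩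
  rw [levelMonomial, ← Finset.prod_mul_distrib]
  refine Finset.prod_congr rfl fun i _ => ?_
  rw [← hξ i n, ← pow_mul, ← pow_add, Nat.mod_add_div]

variable {M M' : Type u} [AddCommGroup M] [Module A M] [Module B M]
  [AddCommGroup M'] [Module A M'] [Module B M']

theorem levelSpan_mono {S T : Set M} (h : S ⊆ T) (n : ℕ) :
    levelSpan A B ξ n M S ≤ levelSpan A B ξ n M T :=
  Submodule.span_mono fun _ ⟨b, hb, s, hs, hy⟩ => ⟨b, hb, s, h hs, hy⟩

theorem levelSpan_mono_level (hξ : ∀ i n, ξ i (n + 1) ^ p = ξ i n) {m n : ℕ} (hmn : m ≤ n)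
    (S : Set M) : levelSpan A B ξ m M S ≤ levelSpan A B ξ n M S :=
  Submodule.span_mono fun _ ⟨b, hb, s, hs, hy⟩ => ⟨b, rootLevel_mono hξ hmn hb, s, hs, hy⟩

theorem levelSpan_empty (n : ℕ) : levelSpan A B ξ n M ∅ = ⊥ := by
  simp [levelSpan]

variable [IsScalarTower A B M] [IsScalarTower A B M']

theorem levelSpan_eq_restrictScalars_span (n : ℕ) (S : Set M) :
    levelSpan A B ξ n M S = (Submodule.span (rootLevel A B ξ n) S).restrictScalars A := by
  rw [← Submodule.span_smul_of_span_eq_top (R := A) Submodule.span_univ, levelSpan]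
  congr 1
  ext y
  simp [Set.mem_smul, eq_comm, Subalgebra.smul_def]

theorem smul_mem_levelSpan {n : ℕ} {b : B} (hb : b ∈ rootLevel A B ξ n) {S : Set M} {x : M}
    (hx : x ∈ levelSpan A B ξ n M S) : b • x ∈ levelSpan A B ξ n M S := by
  rw [levelSpan_eq_restrictScalars_span] at hx ⊢
  exact Submodule.smul_mem _ (⟨b, hb⟩ : rootLevel A B ξ n) hx

theorem subset_levelSpan (n : ℕ) (S : Set M) : S ⊆ levelSpan A B ξ n M S := by
  rw [levelSpan_eq_restrictScalars_span]
  exact Submodule.subset_span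

theorem levelSpan_le_of_subset {n : ℕ} {S T : Set M} (h : S ⊆ levelSpan A B ξ n M T) :
    levelSpan A B ξ n M S ≤ levelSpan A B ξ n M T :=
  Submodule.span_le.2 fun _ ⟨_, hb, _, hs, hy⟩ => hy ▸ smul_mem_levelSpan hb (h hs)

theorem map_levelSpan (f : M →ₗ[B] M') (n : ℕ) (S : Set M) :
    (levelSpan A B ξ n M S).map (f.restrictScalars A) = levelSpan A B ξ n M' (f '' S) := by
  rw [levelSpan, levelSpan, Submodule.map_span]
  congr 1
  ext y
  constructor
  · rintro ⟨_, ⟨b, hb, s, hs, rfl⟩, rfl⟩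
    exact ⟨b, hb, f s, ⟨s, hs, rfl⟩, by simp⟩
  · rintro ⟨b, hb, _, ⟨s, hs, rfl⟩, rfl⟩
    exact ⟨b • s, ⟨b, hb, s, hs, rfl⟩, by simp⟩

theorem levelSpan_succ_le_iSup (hξ : ∀ i n, ξ i (n + 1) ^ p = ξ i n) (hp : 0 < p) (n : ℕ)
    (S : Set M) : levelSpan A B ξ (n + 1) M S ≤ ⨆ a : Fin d → Fin p,
      (levelSpan A B ξ n M S).map (DistribSMul.toLinearMap A M (levelMonomial ξ n (a ·))) := by
  refine Submodule.span_le.2 ?_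
  rintro _ ⟨b, hb, s, hs, rfl⟩
  let ρ := (LinearMap.toSpanSingleton B M s).restrictScalars A
  refine (Submodule.map_span_le ρ _ _).2 ?_ ⟨b, rootLevel_succ_le_span hξ hp n hb, rfl⟩
  rintro _ ⟨a, c, hc, rfl⟩
  refine Submodule.mem_iSup_of_mem a ⟨c • s, Submodule.subset_span ⟨c, hc, s, hs, rfl⟩, ?_⟩
  simp [ρ, mul_smul]

theorem length_levelSpan_succ_le (hξ : ∀ i n, ξ i (n + 1) ^ p = ξ i n) (hp : 0 < p) (n : ℕ)
    (S : Set M) : Module.length A (levelSpan A B ξ (n + 1) M S)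
      ≤ p ^ d * Module.length A (levelSpan A B ξ n M S) := by
  simpa using Module.length_le_card_mul_of_le_iSup_map _ _ (levelSpan_succ_le_iSup hξ hp n S)

theorem levelSpan_fg {n : ℕ} [Module.Finite A (rootLevel A B ξ n)] {S : Set M} (hS : S.Finite) :
    (levelSpan A B ξ n M S).FG := by
  rw [levelSpan_eq_restrictScalars_span]
  exact (Submodule.fg_span hS).restrictScalars

theorem exists_mem_levelSpan (hξ : ∀ i n, ξ i (n + 1) ^ p = ξ i n)
    (hunion : ∀ b : B, ∃ n, b ∈ rootLevel A B ξ n) {T : Set M} {x : M}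
    (hx : x ∈ Submodule.span B T) : ∃ n, x ∈ levelSpan A B ξ n M T := by
  induction hx using Submodule.span_induction with
  | mem x hx => exact ⟨0, subset_levelSpan 0 T hx⟩
  | zero => exact ⟨0, zero_mem _⟩
  | add x y _ _ hx hy =>
    obtain ⟨m, hm⟩ := hx
    obtain ⟨n, hn⟩ := hy
    exact ⟨max m n, add_mem (levelSpan_mono_level hξ (le_max_left m n) T hm)
      (levelSpan_mono_level hξ (le_max_right m n) T hn)⟩
  | smul b x _ hx =>
    obtain ⟨m, hb⟩ := hunion b
    obtain ⟨n, hn⟩ := hx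
    exact ⟨max m n, smul_mem_levelSpan (rootLevel_mono hξ (le_max_left m n) hb)
      (levelSpan_mono_level hξ (le_max_right m n) T hn)⟩

theorem exists_levelSpan_le (hξ : ∀ i n, ξ i (n + 1) ^ p = ξ i n)
    (hunion : ∀ b : B, ∃ n, b ∈ rootLevel A B ξ n) {S T : Set M} (hS : S.Finite)
    (h : S ⊆ Submodule.span B T) :
    ∃ m, ∀ n, m ≤ n → levelSpan A B ξ n M S ≤ levelSpan A B ξ n M T := by
  choose! level hlevel using fun s (hs : s ∈ S) => exists_mem_levelSpan hξ hunion (h hs)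
  obtain ⟨m, hm⟩ := (hS.image level).bddAbove
  exact ⟨m, fun n hmn => levelSpan_le_of_subset fun s hs =>
    levelSpan_mono_level hξ ((hm ⟨s, hs, rfl⟩).trans hmn) T (hlevel s hs)⟩

end Levels

section SpanLength

open scoped ENNReal

noncomputable def levelLength (A B : Type u) [CommRing A] [CommRing B] [Algebra A B] (p : ℕ)
    {d : ℕ} (ξ : Fin d → ℕ → B) (M : Type u) [AddCommGroup M] [Module A M] [Module B M]
    (S : Set M) (n : ℕ) : ℝ≥0∞ :=
  Module.length A (levelSpan A B ξ n M S) / (p : ℝ≥0∞) ^ (n * d)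

noncomputable def spanLength (A B : Type u) [CommRing A] [CommRing B] [Algebra A B] (p : ℕ)
    {d : ℕ} (ξ : Fin d → ℕ → B) (M : Type u) [AddCommGroup M] [Module A M] [Module B M]
    (S : Set M) : ℝ≥0∞ :=
  ⨅ n, levelLength A B p ξ M S n

variable {A B : Type u} [CommRing A] [CommRing B] [Algebra A B] {d : ℕ} {ξ : Fin d → ℕ → B}
  {p : ℕ} {M M' : Type u} [AddCommGroup M] [Module A M] [Module B M]
  [AddCommGroup M'] [Module A M'] [Module B M']

theorem spanLength_empty : spanLength A B p ξ M ∅ = 0 := by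
  refine le_antisymm (iInf_le_of_le 0 ?_) bot_le
  rw [levelLength, levelSpan_empty]
  simp

variable [IsScalarTower A B M] [IsScalarTower A B M']

theorem levelLength_antitone (hξ : ∀ i n, ξ i (n + 1) ^ p = ξ i n) (hp : 0 < p) (S : Set M) :
    Antitone (levelLength A B p ξ M S) := by
  refine antitone_nat_of_succ_le fun n => ?_
  have hpow : (p : ℝ≥0∞) ^ ((n + 1) * d) = (p : ℝ≥0∞) ^ d * (p : ℝ≥0∞) ^ (n * d) := by
    rw [← pow_add]
    ring_nf
  calc levelLength A B p ξ M S (n + 1)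
      ≤ (p : ℝ≥0∞) ^ d * Module.length A (levelSpan A B ξ n M S)
          / ((p : ℝ≥0∞) ^ d * (p : ℝ≥0∞) ^ (n * d)) := by
        rw [levelLength, hpow]
        gcongr
        exact_mod_cast length_levelSpan_succ_le hξ hp n S
    _ = levelLength A B p ξ M S n :=
        ENNReal.mul_div_mul_left _ _ (by positivity) (by simp)

theorem spanLength_le_of_subset_span (hξ : ∀ i n, ξ i (n + 1) ^ p = ξ i n)
    (hunion : ∀ b : B, ∃ n, b ∈ rootLevel A B ξ n) (hp : 0 < p) {S T : Set M} (hS : S.Finite)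
    (h : S ⊆ Submodule.span B T) : spanLength A B p ξ M S ≤ spanLength A B p ξ M T := by
  obtain ⟨m, hm⟩ := exists_levelSpan_le hξ hunion hS h
  refine le_iInf fun n => (iInf_le _ (n + m)).trans ?_
  calc levelLength A B p ξ M S (n + m) ≤ levelLength A B p ξ M T (n + m) := by
        unfold levelLength
        gcongr
        exact Module.length_le_of_injective _ (Submodule.inclusion_injective (hm _ le_add_self))
    _ ≤ levelLength A B p ξ M T n := levelLength_antitone hξ hp T le_self_add

theorem normalizedLength_eq_iSup_spanLength (hξ : ∀ i n, ξ i (n + 1) ^ p = ξ i n)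
    (hunion : ∀ b : B, ∃ n, b ∈ rootLevel A B ξ n) (hp : 0 < p) :
    normalizedLength A B p ξ M = ⨆ S : Finset M, spanLength A B p ξ M S := by
  have hgen (S : Finset M) :
      ⨅ (S' : Finset M) (_ : Submodule.span B (S' : Set M) = Submodule.span B S),
        spanLength A B p ξ M S' = spanLength A B p ξ M S :=
    le_antisymm (iInf_le_of_le S (iInf_le _ rfl)) <| le_iInf₂ fun S' hS' =>
      spanLength_le_of_subset_span hξ hunion hp S.finite_toSet (hS' ▸ Submodule.subset_span)
  simp_rw [normalizedLength, moduleLength_eq_length]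
  refine le_antisymm (iSup₂_le fun N ⟨S, hS⟩ => ?_) (iSup_le fun S => ?_)
  · subst hS
    exact (hgen S).le.trans (le_iSup (fun S : Finset M => spanLength A B p ξ M S) S)
  · exact le_iSup₂_of_le (Submodule.span B (S : Set M)) ⟨S, rfl⟩ (hgen S).ge

theorem spanLength_le_normalizedLength (hξ : ∀ i n, ξ i (n + 1) ^ p = ξ i n)
    (hunion : ∀ b : B, ∃ n, b ∈ rootLevel A B ξ n) (hp : 0 < p) {S : Set M} (hS : S.Finite) :
    spanLength A B p ξ M S ≤ normalizedLength A B p ξ M := by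
  rw [normalizedLength_eq_iSup_spanLength hξ hunion hp]
  exact le_iSup_of_le hS.toFinset (by rw [hS.coe_toFinset])

theorem levelLength_image_add_le (f : M →ₗ[B] M') {S T : Set M} (hST : S ⊆ T) (n : ℕ) :
    levelLength A B p ξ M' (f '' T) n + levelLength A B p ξ M S n
      ≤ levelLength A B p ξ M T n + levelLength A B p ξ M' (f '' S) n := by
  rw [levelLength, levelLength, levelLength, levelLength, ← ENNReal.add_div, ← ENNReal.add_div,
    ← map_levelSpan, ← map_levelSpan]
  refine ENNReal.div_le_div_right ?_ _
  exact_mod_cast Submodule.length_map_add_le_of_le _ (levelSpan_mono hST n)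

theorem spanLength_image_add_le (hξ : ∀ i n, ξ i (n + 1) ^ p = ξ i n) (hp : 0 < p)
    (f : M →ₗ[B] M') {S T : Set M} (hST : S ⊆ T) :
    spanLength A B p ξ M' (f '' T) + spanLength A B p ξ M S
      ≤ spanLength A B p ξ M T + spanLength A B p ξ M' (f '' S) := by
  have hdir : ∀ (U : Set M) (U' : Set M'), ∀ m n, ∃ k, levelLength A B p ξ M U k
      + levelLength A B p ξ M' U' k ≤ levelLength A B p ξ M U m + levelLength A B p ξ M' U' n :=
    fun U U' m n => ⟨max m n, add_le_add (levelLength_antitone hξ hp U (le_max_left m n))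
      (levelLength_antitone hξ hp U' (le_max_right m n))⟩
  rw [spanLength, spanLength, spanLength, spanLength, add_comm, ENNReal.iInf_add_iInf (hdir S _),
    ENNReal.iInf_add_iInf (hdir T _)]
  exact le_iInf fun n => iInf_le_of_le n (by rw [add_comm]; exact levelLength_image_add_le f hST n)

theorem normalizedLength_add_spanLength_le (hξ : ∀ i n, ξ i (n + 1) ^ p = ξ i n)
    (hunion : ∀ b : B, ∃ n, b ∈ rootLevel A B ξ n) (hp : 0 < p) (f : M →ₗ[B] M')
    (hf : Function.Surjective f) {S : Set M} (hS : S.Finite) :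
    normalizedLength A B p ξ M' + spanLength A B p ξ M S
      ≤ normalizedLength A B p ξ M + spanLength A B p ξ M' (f '' S) := by
  rw [normalizedLength_eq_iSup_spanLength hξ hunion hp, ENNReal.iSup_add]
  refine iSup_le fun T' => ?_
  let T := Function.surjInv hf '' T' ∪ S
  have hT : T.Finite := (T'.finite_toSet.image _).union hS
  have hT' : (T' : Set M') ⊆ f '' T := fun x hx =>
    ⟨Function.surjInv hf x, Or.inl ⟨x, hx, rfl⟩, Function.surjInv_eq hf x⟩
  calc spanLength A B p ξ M' T' + spanLength A B p ξ M S
      ≤ spanLength A B p ξ M' (f '' T) + spanLength A B p ξ M S := by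
        gcongr
        exact spanLength_le_of_subset_span hξ hunion hp T'.finite_toSet
          (hT'.trans Submodule.subset_span)
    _ ≤ spanLength A B p ξ M T + spanLength A B p ξ M' (f '' S) :=
        spanLength_image_add_le hξ hp f Set.subset_union_right
    _ ≤ normalizedLength A B p ξ M + spanLength A B p ξ M' (f '' S) := by
        gcongr
        exact spanLength_le_normalizedLength hξ hunion hp hT

theorem normalizedLength_le_of_surjective (hξ : ∀ i n, ξ i (n + 1) ^ p = ξ i n)
    (hunion : ∀ b : B, ∃ n, b ∈ rootLevel A B ξ n) (hp : 0 < p) (f : M →ₗ[B] M')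
    (hf : Function.Surjective f) : normalizedLength A B p ξ M' ≤ normalizedLength A B p ξ M := by
  simpa [spanLength_empty] using
    normalizedLength_add_spanLength_le hξ hunion hp f hf Set.finite_empty

end SpanLength

theorem exists_le_forall_transition_eq_zero {R ι : Type*} [Semiring R] [Preorder ι]
    [IsDirected ι (· ≤ ·)] {F : ι → Type*} [∀ i, AddCommMonoid (F i)] [∀ i, Module R (F i)]
    (t : ∀ i j, i ≤ j → F i →ₗ[R] F j)
    (ht_comp : ∀ i j k (hij : i ≤ j) (hjk : j ≤ k),
      (t j k hjk).comp (t i j hij) = t i k (hij.trans hjk))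
    {i : ι} (Y : Finset (F i)) (hY : ∀ y ∈ Y, ∃ j, ∃ hij : i ≤ j, t i j hij y = 0) :
    ∃ j, ∃ hij : i ≤ j, ∀ y ∈ Y, t i j hij y = 0 := by
  induction Y using Finset.cons_induction with
  | empty => exact ⟨i, le_rfl, by simp⟩
  | cons y Y hy ih =>
    obtain ⟨j₁, hij₁, hj₁⟩ := ih fun z hz => hY z (Finset.mem_cons_of_mem hz)
    obtain ⟨j₂, hij₂, hj₂⟩ := hY y (Finset.mem_cons_self y Y)
    obtain ⟨k, hj₁k, hj₂k⟩ := directed_of (· ≤ ·) j₁ j₂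
    refine ⟨k, hij₁.trans hj₁k, (Finset.forall_mem_cons hy _).2 ⟨?_, fun z hz => ?_⟩⟩
    · rw [← ht_comp i j₂ k hij₂ hj₂k, LinearMap.comp_apply, hj₂, map_zero]
    · rw [← ht_comp i j₁ k hij₁ hj₁k, LinearMap.comp_apply, hj₁ z hz, map_zero]

section Colimit

open scoped ENNReal

variable {A B : Type u} [CommRing A] [CommRing B] [Algebra A B] {d : ℕ} {ξ : Fin d → ℕ → B}
  {p : ℕ} {ι : Type u} [Preorder ι] [IsDirected ι (· ≤ ·)]
  {F : ι → Type u} [∀ i, AddCommGroup (F i)] [∀ i, Module A (F i)] [∀ i, Module B (F i)]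
  [∀ i, IsScalarTower A B (F i)]
  {M : Type u} [AddCommGroup M] [Module A M] [Module B M] [IsScalarTower A B M]

theorem exists_levelLength_image_eq [IsNoetherianRing A] {n : ℕ}
    [Module.Finite A (rootLevel A B ξ n)] (t : ∀ i j, i ≤ j → F i →ₗ[B] F j)
    (ht_comp : ∀ i j k (hij : i ≤ j) (hjk : j ≤ k),
      (t j k hjk).comp (t i j hij) = t i k (hij.trans hjk))
    (g : ∀ i, F i →ₗ[B] M) (hg_compat : ∀ i j (hij : i ≤ j), (g j).comp (t i j hij) = g i)
    (hg_ker : ∀ i (y : F i), g i y = 0 → ∃ j, ∃ hij : i ≤ j, t i j hij y = 0)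
    {i : ι} {S : Set (F i)} (hS : S.Finite) :
    ∃ j, ∃ hij : i ≤ j,
      levelLength A B p ξ M (g i '' S) n = levelLength A B p ξ (F j) (t i j hij '' S) n := by
  let K := LinearMap.ker ((g i).restrictScalars A) ⊓ levelSpan A B ξ n (F i) S
  have hK : K.FG := isNoetherian_submodule.1
    (isNoetherian_of_fg_of_noetherian _ (levelSpan_fg hS)) K inf_le_right
  obtain ⟨Y, hY⟩ := hK
  have hYker : ∀ y ∈ Y, g i y = 0 := fun y hy => (hY ▸ Submodule.subset_span hy : y ∈ K).1
  obtain ⟨j, hij, hj⟩ := exists_le_forall_transition_eq_zero t ht_comp Y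
    fun y hy => hg_ker i y (hYker y hy)
  refine ⟨j, hij, ?_⟩
  have hKt : K ≤ LinearMap.ker ((t i j hij).restrictScalars A) :=
    hY ▸ Submodule.span_le.2 fun y hy => hj y hy
  rw [levelLength, levelLength, ← hg_compat i j hij, LinearMap.coe_comp, Set.image_comp,
    ← map_levelSpan, ← map_levelSpan, ← Submodule.map_comp,
    Submodule.length_map_comp_eq _ _ _ fun v hv => hKt ⟨?_, hv.2⟩]
  simpa [← hg_compat i j hij] using hv.1

theorem iInf_normalizedLength_add_spanLength_le [IsNoetherianRing A]
    (hξ : ∀ i n, ξ i (n + 1) ^ p = ξ i n) (hunion : ∀ b : B, ∃ n, b ∈ rootLevel A B ξ n)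
    (hp : 0 < p) (hfinite : ∀ n, Module.Finite A (rootLevel A B ξ n))
    (t : ∀ i j, i ≤ j → F i →ₗ[B] F j)
    (ht_comp : ∀ i j k (hij : i ≤ j) (hjk : j ≤ k),
      (t j k hjk).comp (t i j hij) = t i k (hij.trans hjk))
    (ht_surj : ∀ i j (hij : i ≤ j), Function.Surjective (t i j hij))
    (g : ∀ i, F i →ₗ[B] M) (hg_compat : ∀ i j (hij : i ≤ j), (g j).comp (t i j hij) = g i)
    (hg_ker : ∀ i (y : F i), g i y = 0 → ∃ j, ∃ hij : i ≤ j, t i j hij y = 0)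
    {i : ι} {S : Set (F i)} (hS : S.Finite) :
    (⨅ j, normalizedLength A B p ξ (F j)) + spanLength A B p ξ (F i) S
      ≤ normalizedLength A B p ξ (F i) + spanLength A B p ξ M (g i '' S) := by
  refine (le_iInf fun n => ?_).trans ENNReal.add_iInf.ge
  have := hfinite n
  obtain ⟨j, hij, hj⟩ := exists_levelLength_image_eq (A := A) (ξ := ξ) (p := p) (n := n)
    t ht_comp g hg_compat hg_ker hS
  calc (⨅ j, normalizedLength A B p ξ (F j)) + spanLength A B p ξ (F i) S
      ≤ normalizedLength A B p ξ (F j) + spanLength A B p ξ (F i) S := by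
        gcongr
        exact iInf_le (fun j => normalizedLength A B p ξ (F j)) j
    _ ≤ normalizedLength A B p ξ (F i) + spanLength A B p ξ (F j) (t i j hij '' S) :=
        normalizedLength_add_spanLength_le hξ hunion hp _ (ht_surj i j hij) hS
    _ ≤ normalizedLength A B p ξ (F i) + levelLength A B p ξ M (g i '' S) n := by
        rw [hj]
        gcongr
        exact iInf_le _ n

end Colimit

theorem normalizedLength_colimit_surjective_general
    (A B : Type u) [CommRing A] [IsNoetherianRing A] (p : ℕ) [Fact p.Prime]
    [CommRing B] [Algebra A B]
    (d : ℕ)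
    (ξ : Fin d → ℕ → B)
    (hξ : ∀ i n, ξ i (n + 1) ^ p = ξ i n)
    (hunion : ∀ b : B, ∃ n, b ∈ rootLevel A B ξ n)
    (hfree : ∀ n, Module.Free A ↥(rootLevel A B ξ n) ∧
      Module.finrank A ↥(rootLevel A B ξ n) = p ^ (n * d))
    (ι : Type u) [Preorder ι] [IsDirected ι (· ≤ ·)] [Nonempty ι]
    (Mod : ι → Type u) [∀ i, AddCommGroup (Mod i)] [∀ i, Module A (Mod i)]
    [∀ i, Module B (Mod i)] [∀ i, IsScalarTower A B (Mod i)]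
    (t : ∀ i j, i ≤ j → (Mod i →ₗ[B] Mod j))
    (ht_comp : ∀ i j k (hij : i ≤ j) (hjk : j ≤ k),
      (t j k hjk).comp (t i j hij) = t i k (hij.trans hjk))
    (ht_surj : ∀ i j (hij : i ≤ j), Function.Surjective (t i j hij))
    (hfin : ∀ i, normalizedLength A B p ξ (Mod i) ≠ ⊤)
    (M : Type u) [AddCommGroup M] [Module A M] [Module B M] [IsScalarTower A B M]
    (g : ∀ i, Mod i →ₗ[B] M)
    (hg_compat : ∀ i j (hij : i ≤ j), (g j).comp (t i j hij) = g i)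
    (hg_surj : ∀ i, Function.Surjective (g i))
    (hg_ker : ∀ i (y : Mod i), g i y = 0 → ∃ j, ∃ hij : i ≤ j, t i j hij y = 0) :
    normalizedLength A B p ξ M = ⨅ i, normalizedLength A B p ξ (Mod i) := by
  have hp : 0 < p := (Fact.out : p.Prime).pos
  have hfinite : ∀ n, Module.Finite A (rootLevel A B ξ n) := fun n => by
    nontriviality A
    have := (hfree n).1
    exact Module.finite_of_finrank_pos (by rw [(hfree n).2]; positivity)
  refine le_antisymm (le_iInf fun i => normalizedLength_le_of_surjective hξ hunion hp (g i)
    (hg_surj i)) ?_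
  obtain ⟨i⟩ := ‹Nonempty ι›
  refine (ENNReal.add_le_add_iff_left (hfin i)).1 ?_
  calc normalizedLength A B p ξ (Mod i) + ⨅ j, normalizedLength A B p ξ (Mod j)
      = ⨆ S : Finset (Mod i), (⨅ j, normalizedLength A B p ξ (Mod j))
          + spanLength A B p ξ (Mod i) S := by
        rw [add_comm, normalizedLength_eq_iSup_spanLength hξ hunion hp, ENNReal.add_iSup]
    _ ≤ normalizedLength A B p ξ (Mod i) + normalizedLength A B p ξ M := iSup_le fun S =>
        (iInf_normalizedLength_add_spanLength_le hξ hunion hp hfinite t ht_comp ht_surj g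
          hg_compat hg_ker S.finite_toSet).trans
        (add_le_add le_rfl (spanLength_le_normalizedLength hξ hunion hp
          (S.finite_toSet.image _)))

/-- **Normalized length commutes with filtered colimits along surjective transition maps of
finite normalized length**: if `(M_i)` is a filtered system of `m_A`-power-torsion
`A_∞,0^{nc}`-modules with surjective transition maps and `λ_∞(M_i) < ∞` for every `i`, then
`λ_∞(colim_i M_i) = lim_i λ_∞(M_i) = inf_i λ_∞(M_i)`.  The colimit is presented concretely
as a module `M` together with compatible surjective maps `g i : M i → M` such that any
element killed by `g i` is killed by some transition map. -/
theorem normalizedLength_colimit_surjective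
    (A B : Type u) [CommRing A] [IsNoetherianRing A] [IsLocalRing A]
    [IsAdicComplete (maximalIdeal A) A] (p : ℕ) [Fact p.Prime]
    [CharP (ResidueField A) p] [ExpChar (ResidueField A) p] [PerfectRing (ResidueField A) p]
    [CommRing B] [Algebra A B] (hinj : Function.Injective (algebraMap A B))
    (d : ℕ) (hdim : ringKrullDim A = d) (x : Fin d → A)
    (hx : Ideal.span (Set.range x) = maximalIdeal A)
    (ξ : Fin d → ℕ → B) (hξ0 : ∀ i, ξ i 0 = algebraMap A B (x i))
    (hξ : ∀ i n, ξ i (n + 1) ^ p = ξ i n)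
    (hunion : ∀ b : B, ∃ n, b ∈ rootLevel A B ξ n)
    (hfree : ∀ n, Module.Free A ↥(rootLevel A B ξ n) ∧
      Module.finrank A ↥(rootLevel A B ξ n) = p ^ (n * d))
    (ι : Type u) [Preorder ι] [IsDirected ι (· ≤ ·)] [Nonempty ι]
    (Mod : ι → Type u) [∀ i, AddCommGroup (Mod i)] [∀ i, Module A (Mod i)]
    [∀ i, Module B (Mod i)] [∀ i, IsScalarTower A B (Mod i)]
    (htor : ∀ i, ∃ k : ℕ, ∀ a ∈ maximalIdeal A ^ k, ∀ m : Mod i, a • m = 0)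
    (t : ∀ i j, i ≤ j → (Mod i →ₗ[B] Mod j))
    (ht_id : ∀ i, t i i le_rfl = LinearMap.id)
    (ht_comp : ∀ i j k (hij : i ≤ j) (hjk : j ≤ k),
      (t j k hjk).comp (t i j hij) = t i k (hij.trans hjk))
    (ht_surj : ∀ i j (hij : i ≤ j), Function.Surjective (t i j hij))
    (hfin : ∀ i, normalizedLength A B p ξ (Mod i) ≠ ⊤)
    (M : Type u) [AddCommGroup M] [Module A M] [Module B M] [IsScalarTower A B M]
    (g : ∀ i, Mod i →ₗ[B] M)
    (hg_compat : ∀ i j (hij : i ≤ j), (g j).comp (t i j hij) = g i)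
    (hg_surj : ∀ i, Function.Surjective (g i))
    (hg_ker : ∀ i (y : Mod i), g i y = 0 → ∃ j, ∃ hij : i ≤ j, t i j hij y = 0) :
    normalizedLength A B p ξ M = ⨅ i, normalizedLength A B p ξ (Mod i) :=
  normalizedLength_colimit_surjective_general A B p d ξ hξ hunion hfree ι Mod t ht_comp ht_surj hfin
    M g hg_compat hg_surj hg_ker
end

section
/- Let (R, m) be a Noetherian local ring which is not Cohen-Macaulay and y_1,…,y_d a system of parameters. Then the limit closure (y)^{lim} = ∪_{t≥1} ((y_1^t,…,y_d^t) :_R (y_1⋯y_d)^{t-1}) strictly contains the ideal (y_1,…,y_d); in particular there exists u ∉ (y_1,…,y_d) and t with u·(y_1⋯y_d)^{t-1} ∈ (y_1^t,…,y_d^t). -/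
/-!
If `(y)^lim = (y)`, a downward induction on exponent vectors `a ≤ t` yields the monomial colon
identities `(y₁^{t+1}, …, y_d^{t+1}) : y^a ⊆ (y₁^{t+1-a₁}, …, y_d^{t+1-a_d})`. For `a = eᵢ` this
puts every element killed by `yᵢ` into `⋂ₙ 𝔪ⁿ = 0` (Krull), so `yᵢ` is a nonzerodivisor. The
hypothesis `(y)^lim = (y)` passes to `R ⧸ (y₁)` and the images of `y₂, …, y_d`, so by induction
on `d` the system `y` is a regular sequence, i.e. `R` is Cohen–Macaulay.
-/

open IsLocalRing

section

variable {R : Type*} [CommRing R]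

theorem Ideal.colon_singleton_le_of_colon_mul_le {J K : Ideal R} {x m : R} {q : ℕ}
    (hxJ : x ^ (q + 1) ∈ J) (hJK : J ≤ K.colon {m})
    (h₁ : K.colon {m * x} ≤ J ⊔ Ideal.span {x ^ q})
    (h₂ : K.colon {m * x ^ q} ≤ J ⊔ Ideal.span {x}) :
    K.colon {m} ≤ J := by
  intro u hu
  simp only [Submodule.mem_colon_singleton, smul_eq_mul] at hu
  have hux : u ∈ K.colon {m * x} := by
    simpa only [Submodule.mem_colon_singleton, smul_eq_mul, ← mul_assoc] using K.mul_mem_right x hu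
  obtain ⟨j, hj, _, hv, rfl⟩ := Submodule.mem_sup.mp (h₁ hux)
  obtain ⟨c, rfl⟩ := Ideal.mem_span_singleton'.mp hv
  have hjm : j * m ∈ K := by simpa using hJK hj
  have hc : c ∈ K.colon {m * x ^ q} := by
    rw [Submodule.mem_colon_singleton, smul_eq_mul]
    convert K.sub_mem hu hjm using 1
    ring
  obtain ⟨j', hj', _, hv', rfl⟩ := Submodule.mem_sup.mp (h₂ hc)
  obtain ⟨c', rfl⟩ := Ideal.mem_span_singleton'.mp hv'
  have : (j' + c' * x) * x ^ q = j' * x ^ q + c' * x ^ (q + 1) := by ring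
  rw [this]
  exact J.add_mem hj (J.add_mem (J.mul_mem_right _ hj') (J.mul_mem_left _ hxJ))

theorem Ideal.span_range_le_sup_span {ι : Type*} {f g : ι → R} (i₀ : ι)
    (hfg : ∀ i ≠ i₀, f i = g i) :
    Ideal.span (Set.range f) ≤ Ideal.span (Set.range g) ⊔ Ideal.span {f i₀} := by
  rw [Ideal.span_le]
  rintro _ ⟨i, rfl⟩
  by_cases hi : i = i₀
  · subst hi
    exact Ideal.mem_sup_right (Ideal.subset_span rfl)
  · exact Ideal.mem_sup_left (hfg i hi ▸ Ideal.subset_span ⟨i, rfl⟩)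

section LimitClosure

variable {d : ℕ} (y : Fin d → R)

theorem prod_pow_add_single (a : Fin d → ℕ) (i₀ : Fin d) (k : ℕ) :
    ∏ i, y i ^ (a + Pi.single i₀ k : Fin d → ℕ) i = (∏ i, y i ^ a i) * y i₀ ^ k := by
  simp only [Pi.add_apply, pow_add, Finset.prod_mul_distrib]
  congr 1
  rw [Fintype.prod_eq_single i₀ fun i hi => by simp [hi]]
  simp

theorem span_range_pow_le_colon_prod_pow (a b : Fin d → ℕ) :
    Ideal.span (Set.range fun i => y i ^ b i) ≤
      (Ideal.span (Set.range fun i => y i ^ (a i + b i))).colon {∏ i, y i ^ a i} := by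
  rw [Ideal.span_le]
  rintro _ ⟨i, rfl⟩
  have hsplit : y i ^ b i * ∏ j, y j ^ a j =
      (∏ j ∈ Finset.univ.erase i, y j ^ a j) * y i ^ (a i + b i) := by
    rw [← Finset.mul_prod_erase _ _ (Finset.mem_univ i)]
    ring
  rw [SetLike.mem_coe, Submodule.mem_colon_singleton, smul_eq_mul, hsplit]
  exact Ideal.mul_mem_left _ _ (Ideal.subset_span ⟨i, rfl⟩)

/-- `(y)^lim`, with `t` standing for the paper's `t - 1`. -/
def limitClosure : Set R :=
  ⋃ t : ℕ, {r : R | r * (∏ i, y i) ^ t ∈ Ideal.span (Set.range fun i => y i ^ (t + 1))}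

theorem span_subset_limitClosure : (Ideal.span (Set.range y) : Set R) ⊆ limitClosure y :=
  fun u hu => Set.mem_iUnion.mpr ⟨0, by simpa using hu⟩

variable {y}

theorem colon_le_span_of_limitClosure_subset (h : limitClosure y ⊆ Ideal.span (Set.range y))
    (t : ℕ) :
    (Ideal.span (Set.range fun i => y i ^ (t + 1))).colon {(∏ i, y i) ^ t} ≤
      Ideal.span (Set.range y) := fun u hu =>
  h (Set.mem_iUnion.mpr ⟨t, by simpa using hu⟩)

theorem colon_prod_pow_le_of_limitClosure_subset (h : limitClosure y ⊆ Ideal.span (Set.range y))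
    (t : ℕ) (a : Fin d → ℕ) (ha : ∀ i, a i ≤ t) :
    (Ideal.span (Set.range fun i => y i ^ (t + 1))).colon {∏ i, y i ^ a i} ≤
      Ideal.span (Set.range fun i => y i ^ (t + 1 - a i)) := by
  induction hn : ∑ i, (t - a i) using Nat.strong_induction_on generalizing a with
  | _ n ih =>
  by_cases hmax : ∀ i, a i = t
  · obtain rfl : a = fun _ => t := funext hmax
    simpa [Finset.prod_pow] using colon_le_span_of_limitClosure_subset h t
  obtain ⟨i₀, hi₀⟩ := not_forall.mp hmax
  have hlt : a i₀ < t := lt_of_le_of_ne (ha i₀) hi₀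
  -- `a + k • e_{i₀}` with `k = 1` and `k = t - a i₀` are both closer to the base case.
  have ih' : ∀ k, 0 < k → a i₀ + k ≤ t →
      (Ideal.span (Set.range fun i => y i ^ (t + 1))).colon {(∏ i, y i ^ a i) * y i₀ ^ k} ≤
        Ideal.span (Set.range fun i => y i ^ (t + 1 - a i)) ⊔
          Ideal.span {y i₀ ^ (t + 1 - (a i₀ + k))} := by
    intro k hk hkt
    have hle : ∀ i, (a + Pi.single i₀ k : Fin d → ℕ) i ≤ t := fun i => by
      rcases eq_or_ne i i₀ with rfl | hi <;> simp [*]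
    have hsum : ∑ i, (t - (a + Pi.single i₀ k : Fin d → ℕ) i) < n := by
      subst hn
      refine Finset.sum_lt_sum (fun i _ => by simp only [Pi.add_apply]; omega)
        ⟨i₀, Finset.mem_univ _, ?_⟩
      simp only [Pi.add_apply, Pi.single_eq_same]
      omega
    rw [← prod_pow_add_single]
    refine (ih _ hsum _ hle rfl).trans <| (Ideal.span_range_le_sup_span
      (g := fun i => y i ^ (t + 1 - a i)) i₀ fun i hi => ?_).trans_eq ?_
    · simp [hi]
    · simp
  refine Ideal.colon_singleton_le_of_colon_mul_le (x := y i₀) (q := t - a i₀) ?_ ?_ ?_ ?_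
  · rw [show t - a i₀ + 1 = t + 1 - a i₀ by omega]
    exact Ideal.subset_span ⟨i₀, rfl⟩
  · convert span_range_pow_le_colon_prod_pow y a (fun i => t + 1 - a i) using 6 with i
    have := ha i
    omega
  · simpa [show t + 1 - (a i₀ + 1) = t - a i₀ by omega] using ih' 1 one_pos (by omega)
  · simpa [show t + 1 - (a i₀ + (t - a i₀)) = 1 by omega] using ih' (t - a i₀) (by omega) (by omega)

theorem isSMulRegular_of_limitClosure_subset [IsNoetherianRing R] [IsLocalRing R]
    (hy : ∀ i, y i ∈ maximalIdeal R) (h : limitClosure y ⊆ Ideal.span (Set.range y))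
    (i₀ : Fin d) : IsSMulRegular R (y i₀) := by
  refine isSMulRegular_iff_right_eq_zero_of_smul.mpr fun w hw => ?_
  have hmem : ∀ n, w ∈ maximalIdeal R ^ n := by
    intro n
    have hcolon : w ∈ (Ideal.span (Set.range fun i => y i ^ (n + 1 + 1))).colon
        {∏ i, y i ^ (0 + Pi.single i₀ 1 : Fin d → ℕ) i} := by
      rw [Submodule.mem_colon_singleton, prod_pow_add_single, smul_eq_mul]
      simp [mul_comm w, ← smul_eq_mul, hw]
    have hle : ∀ i, (0 + Pi.single i₀ 1 : Fin d → ℕ) i ≤ 1 := fun i => by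
      rcases eq_or_ne i i₀ with rfl | hi <;> simp [*]
    refine Ideal.span_le.mpr ?_ (colon_prod_pow_le_of_limitClosure_subset h _ _
      (fun i => (hle i).trans (by omega)) hcolon)
    rintro _ ⟨i, rfl⟩
    exact Ideal.pow_le_pow_right (by have := hle i; omega) (Ideal.pow_mem_pow (hy i) _)
  have hw : w ∈ ⨅ n, maximalIdeal R ^ n := Submodule.mem_iInf _ |>.mpr hmem
  rwa [Ideal.iInf_pow_eq_bot_of_isLocalRing _ (maximalIdeal.isMaximal R).ne_top] at hw

end LimitClosure

theorem limitClosure_quotient_subset {d : ℕ} {y : Fin (d + 1) → R}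
    (h : limitClosure y ⊆ Ideal.span (Set.range y)) :
    limitClosure (fun i : Fin d => Ideal.Quotient.mk (Ideal.span {y 0}) (y i.succ)) ⊆
      Ideal.span (Set.range fun i : Fin d => Ideal.Quotient.mk (Ideal.span {y 0}) (y i.succ)) := by
  set I := Ideal.span {y 0}
  have hmap (f : Fin d → R) :
      Ideal.span (Set.range fun i => Ideal.Quotient.mk I (f i)) = (Ideal.span (Set.range f)).map
        (Ideal.Quotient.mk I) := by
    rw [Ideal.map_span, ← Set.range_comp]
    rfl
  intro v hv
  obtain ⟨t, ht⟩ := Set.mem_iUnion.mp hv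
  obtain ⟨u, rfl⟩ := Ideal.Quotient.mk_surjective v
  simp only [Set.mem_ofPred_eq, ← map_prod, ← map_pow, ← map_mul, hmap,
    Ideal.mem_quotient_iff_mem_sup] at ht
  have hcolon : Ideal.span (Set.range fun i : Fin d => y i.succ ^ (t + 1)) ⊔ I ≤
      (Ideal.span (Set.range fun i => y i ^ (t + 1))).colon {y 0 ^ t} := by
    refine sup_le (Ideal.span_le.mpr ?_) (Ideal.span_le.mpr ?_) <;>
      rintro _ ⟨i, rfl⟩ <;> rw [SetLike.mem_coe, Submodule.mem_colon_singleton, smul_eq_mul]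
    · exact Ideal.mul_mem_right _ _ (Ideal.subset_span ⟨i.succ, rfl⟩)
    · rw [← pow_succ']
      exact Ideal.subset_span ⟨0, rfl⟩
  have hu : u ∈ Ideal.span (Set.range y) := by
    refine h (Set.mem_iUnion.mpr ⟨t, ?_⟩)
    have := Submodule.mem_colon_singleton.mp (hcolon ht)
    rw [Set.mem_ofPred_eq, Fin.prod_univ_succ, mul_pow]
    convert this using 1
    rw [smul_eq_mul]
    ring
  rw [SetLike.mem_coe, hmap, Ideal.mem_quotient_iff_mem_sup]
  rwa [Fin.range_fin_succ, Ideal.span_insert, sup_comm] at hu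

open scoped Pointwise in
theorem RingTheory.Sequence.isWeaklyRegular_cons_iff_quotient (r : R) (rs : List R) :
    IsWeaklyRegular R (r :: rs) ↔
      IsSMulRegular R r ∧
        IsWeaklyRegular (R ⧸ Ideal.span {r}) (rs.map (Ideal.Quotient.mk (Ideal.span {r}))) := by
  have hspan : (Ideal.span {r} : Submodule R R) = r • ⊤ := by
    rw [← Submodule.ideal_span_singleton_smul, smul_eq_mul, Ideal.mul_top]
  rw [isWeaklyRegular_cons_iff, ← (Submodule.quotEquivOfEq _ _ hspan).isWeaklyRegular_congr,
    ← Ideal.Quotient.algebraMap_eq, isWeaklyRegular_map_algebraMap_iff]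

end

theorem isWeaklyRegular_of_limitClosure_subset {R : Type*} [CommRing R] [IsNoetherianRing R]
    [IsLocalRing R] {d : ℕ} {y : Fin d → R} (hy : ∀ i, y i ∈ maximalIdeal R)
    (h : limitClosure y ⊆ Ideal.span (Set.range y)) :
    RingTheory.Sequence.IsWeaklyRegular R (List.ofFn y) := by
  induction d generalizing R with
  | zero => exact .nil R R
  | succ d ih =>
    have : Nontrivial (R ⧸ Ideal.span {y 0}) := Ideal.Quotient.nontrivial_iff.mpr
      fun htop => (maximalIdeal.isMaximal R).ne_top (top_le_iff.mp
        (htop ▸ Ideal.span_le.mpr (Set.singleton_subset_iff.mpr (hy 0))))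
    have := IsLocalRing.of_surjective' _ (Ideal.Quotient.mk_surjective (I := Ideal.span {y 0}))
    have := IsLocalHom.of_surjective _ (Ideal.Quotient.mk_surjective (I := Ideal.span {y 0}))
    rw [List.ofFn_succ, RingTheory.Sequence.isWeaklyRegular_cons_iff_quotient, List.map_ofFn]
    exact ⟨isSMulRegular_of_limitClosure_subset hy h 0,
      ih (fun i => map_nonunit _ _ (hy i.succ)) (limitClosure_quotient_subset h)⟩

theorem limitClosure_strict_of_not_CM_general {R : Type*} [CommRing R] [IsNoetherianRing R]
    [IsLocalRing R] (d : ℕ) (y : Fin d → R)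
    (hy₁ : Ideal.span (Set.range y) ≤ maximalIdeal R)
    (hnotCM : ¬ RingTheory.Sequence.IsRegular R (List.ofFn y)) :
    (↑(Ideal.span (Set.range y)) : Set R) ⊂
        (⋃ t : ℕ, {r : R | r * (∏ i, y i) ^ t ∈
          Ideal.span (Set.range fun i => y i ^ (t + 1))}) ∧
      ∃ (u : R) (t : ℕ), u ∉ Ideal.span (Set.range y) ∧
        u * (∏ i, y i) ^ t ∈ Ideal.span (Set.range fun i => y i ^ (t + 1)) := by
  have hy : ∀ i, y i ∈ maximalIdeal R := fun i => hy₁ (Ideal.subset_span ⟨i, rfl⟩)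
  have hstrict : ¬ limitClosure y ⊆ Ideal.span (Set.range y) := fun h =>
    hnotCM <| (isRegular_iff_isWeaklyRegular_of_subset_maximalIdeal
      (by simpa [List.mem_ofFn] using hy)).mpr (isWeaklyRegular_of_limitClosure_subset hy h)
  obtain ⟨u, hu, hnu⟩ := Set.not_subset.mp hstrict
  obtain ⟨t, ht⟩ := Set.mem_iUnion.mp hu
  exact ⟨(span_subset_limitClosure y).ssubset_of_not_subset hstrict, u, t, hnu, ht⟩

/-- Let `(R, m)` be a Noetherian local ring of dimension `d` which is not Cohen–Macaulay
(equivalently, the system of parameters `y` is not a regular sequence), and `y_1, …, y_d` a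
system of parameters.  Then the limit closure
`(y)^lim = ∪_t ((y_1^t, …, y_d^t) :_R (y_1⋯y_d)^{t-1})` strictly contains the ideal
`(y_1, …, y_d)`; in particular there exist `u ∉ (y_1, …, y_d)` and `t` with
`u·(y_1⋯y_d)^{t-1} ∈ (y_1^t, …, y_d^t)` (below the exponents are shifted by `t ↦ t + 1`). -/
theorem limitClosure_strict_of_not_CM {R : Type*} [CommRing R] [IsNoetherianRing R]
    [IsLocalRing R] (d : ℕ) (hdim : ringKrullDim R = d) (y : Fin d → R)
    (hy₁ : Ideal.span (Set.range y) ≤ maximalIdeal R)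
    (hy₂ : ∃ k : ℕ, maximalIdeal R ^ k ≤ Ideal.span (Set.range y))
    (hnotCM : ¬ RingTheory.Sequence.IsRegular R (List.ofFn y)) :
    (↑(Ideal.span (Set.range y)) : Set R) ⊂
        (⋃ t : ℕ, {r : R | r * (∏ i, y i) ^ t ∈
          Ideal.span (Set.range fun i => y i ^ (t + 1))}) ∧
      ∃ (u : R) (t : ℕ), u ∉ Ideal.span (Set.range y) ∧
        u * (∏ i, y i) ^ t ∈ Ideal.span (Set.range fun i => y i ^ (t + 1)) :=
  limitClosure_strict_of_not_CM_general d y hy₁ hnotCM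
end
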